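/- arXiv:2312.03149 — 8 statements merged into one kernel-verified Lean document; each statement's English description precedes it below -/
import Mathlib

section
/- Let G be a nut graph and let x be a nonzero vector in the kernel of the adjacency matrix of G. Then: (a) for every automorphism α of G, the permuted vector x^α equals x or −x; (b) |x_i| = |x_j| whenever vertices i and j belong to the same orbit of Aut(G); (c) consequently there are nonzero constants a_1, …, a_k, one per vertex orbit V_1, …, V_k, such that x_i ∈ {+a_j, −a_j} for every vertex i in orbit V_j. -/
namespace NutPaper

open Matrix

variable {V : Type*}

open scoped Classical in
/-- The real adjacency matrix of a simple graph. -/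
noncomputable def adjMat (G : SimpleGraph V) : Matrix V V ℝ :=
  Matrix.of fun u v => if G.Adj u v then (1 : ℝ) else 0

/-- A nut graph: the adjacency matrix has nullity exactly one, and every
nonzero kernel vector has all entries nonzero. -/
def IsNutGraph [Fintype V] (G : SimpleGraph V) : Prop :=
  Module.finrank ℝ (LinearMap.ker (Matrix.mulVecLin (adjMat G))) = 1 ∧
  ∀ x : V → ℝ, adjMat G *ᵥ x = 0 → x ≠ 0 → ∀ v, x v ≠ 0

/-- The orbit of a vertex under the full automorphism group. -/
def vertexOrbit (G : SimpleGraph V) (v : V) : Set V :=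
  {u | ∃ α : G ≃g G, α v = u}

/-- The set of vertex orbits. -/
def vertexOrbits (G : SimpleGraph V) : Set (Set V) :=
  Set.range (vertexOrbit G)

/-- The number of vertex orbits. -/
noncomputable def numVertexOrbits (G : SimpleGraph V) : ℕ :=
  Nat.card (vertexOrbits G)

/-- The orbit of an edge under the full automorphism group. -/
def edgeOrbit (G : SimpleGraph V) (e : Sym2 V) : Set (Sym2 V) :=
  {f | ∃ α : G ≃g G, Sym2.map (⇑α) e = f}

/-- The set of edge orbits. -/
def edgeOrbits (G : SimpleGraph V) : Set (Set (Sym2 V)) :=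
  edgeOrbit G '' G.edgeSet

/-- The number of edge orbits. -/
noncomputable def numEdgeOrbits (G : SimpleGraph V) : ℕ :=
  Nat.card (edgeOrbits G)


/-- Orbit-wise properties of the kernel eigenvector of a nut
graph: the kernel vector is symmetric or antisymmetric under every
automorphism, entries on vertices in the same orbit have equal absolute value,
and on each vertex orbit the entries take only the values `+a` and `-a` for
some nonzero constant `a` depending on the orbit. -/
theorem nut_kernel_orbit_props {V : Type*} [Fintype V]
    (G : SimpleGraph V)
    (hnut : IsNutGraph G)
    (x : V → ℝ) (hker : adjMat G *ᵥ x = 0) (hx : x ≠ 0) :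
    (∀ α : G ≃g G, (fun v => x (α v)) = x ∨ (fun v => x (α v)) = -x) ∧
    (∀ i j : V, (∃ α : G ≃g G, α i = j) → |x i| = |x j|) ∧
    (∀ v : V, ∃ a : ℝ, a ≠ 0 ∧ ∀ u ∈ vertexOrbit G v, x u = a ∨ x u = -a) := by
  classical
  have key : ∀ α : G ≃g G, (fun v => x (α v)) = x ∨ (fun v => x (α v)) = -x := by
    intro α
    set y : V → ℝ := fun v => x (α v) with hy_def
    have hyker : adjMat G *ᵥ y = 0 := by
      funext u
      have hterm : ∀ v : V, adjMat G u v * y v = adjMat G (α u) (α v) * x (α v) := by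
        intro v
        have : adjMat G (α u) (α v) = adjMat G u v := by
          simp [adjMat, α.map_adj_iff]
        rw [this]
      calc (adjMat G *ᵥ y) u = ∑ v, adjMat G u v * y v := rfl
        _ = ∑ v, adjMat G (α u) (α v) * x (α v) := Finset.sum_congr rfl (fun v _ => hterm v)
        _ = ∑ w, adjMat G (α u) w * x w := Equiv.sum_comp α.toEquiv (fun w => adjMat G (α u) w * x w)
        _ = (adjMat G *ᵥ x) (α u) := rfl
        _ = 0 := by rw [hker]; rfl
    set K := LinearMap.ker (Matrix.mulVecLin (adjMat G)) with hK
    have hxK : x ∈ K := by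
      simp [hK, LinearMap.mem_ker, Matrix.mulVecLin_apply, hker]
    have hyK : y ∈ K := by
      simp [hK, LinearMap.mem_ker, Matrix.mulVecLin_apply, hyker]
    have hxne : (⟨x, hxK⟩ : K) ≠ 0 := by
      simpa [Subtype.ext_iff] using hx
    have hspan : Submodule.span ℝ {(⟨x, hxK⟩ : K)} = ⊤ :=
      (finrank_eq_one_iff_of_nonzero _ hxne).mp hnut.1
    have hmem : (⟨y, hyK⟩ : K) ∈ Submodule.span ℝ {(⟨x, hxK⟩ : K)} := by
      rw [hspan]; exact Submodule.mem_top
    obtain ⟨c, hc⟩ := Submodule.mem_span_singleton.mp hmem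
    have hcy : y = c • x := by
      have := congrArg Subtype.val hc
      simpa using this.symm
    have hsumx : (0:ℝ) < ∑ v, x v ^ 2 := by
      obtain ⟨v, hv⟩ := Function.ne_iff.mp hx
      exact Finset.sum_pos' (fun i _ => sq_nonneg _)
        ⟨v, Finset.mem_univ v, lt_of_le_of_ne (sq_nonneg _) (Ne.symm (pow_ne_zero 2 hv))⟩
    have hsum : ∑ v, y v ^ 2 = ∑ v, x v ^ 2 := by
      simpa using (Equiv.sum_comp α.toEquiv (fun v => x v ^ 2))
    have hc2 : c * c = 1 := by
      have h1 : ∑ v, y v ^ 2 = (c * c) * ∑ v, x v ^ 2 := by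
        rw [hcy, Finset.mul_sum]
        exact Finset.sum_congr rfl (fun v _ => by simp [Pi.smul_apply]; ring)
      have h2 : (c * c) * ∑ v, x v ^ 2 = 1 * ∑ v, x v ^ 2 := by
        rw [one_mul]; rw [← h1]; exact hsum
      exact mul_right_cancel₀ (ne_of_gt hsumx) h2
    rcases mul_self_eq_one_iff.mp hc2 with h | h
    · left; rw [hcy, h]; simp
    · right; rw [hcy, h]; funext v; simp
  refine ⟨key, ?_, ?_⟩
  · rintro i j ⟨α, hα⟩
    rcases key α with h | h
    · have := congrFun h i
      rw [hα] at this
      rw [this]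
    · have := congrFun h i
      rw [hα] at this
      rw [this, Pi.neg_apply, abs_neg]
  · intro v
    refine ⟨x v, hnut.2 x hker hx v, ?_⟩
    rintro u ⟨α, hα⟩
    rcases key α with h | h
    · have := congrFun h v
      rw [hα] at this
      exact Or.inl this
    · have := congrFun h v
      rw [hα] at this
      exact Or.inr this

end NutPaper
end

section
/- Let G be a nut graph with vertex orbits V_1, …, V_k under Aut(G), and let x be a nonzero kernel vector of the adjacency matrix of G. Suppose there exists a vertex orbit V_ℓ such that (i) V_ℓ is a leaf in the vertex-orbit graph of G (i.e., exactly one other orbit contains vertices adjacent to vertices of V_ℓ), and (ii) V_ℓ is an independent set in G. Then for every orbit V_i, the sum of the entries of x over V_i is zero; moreover, within each orbit V_i the number of vertices with positive entry equals the number with negative entry, and hence each orbit V_i has even size. -/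
namespace NutPaper

open Matrix

variable {V : Type*}

section Aux

variable {G : SimpleGraph V}

lemma mem_vertexOrbit_self (v : V) : v ∈ vertexOrbit G v :=
  ⟨RelIso.refl _, rfl⟩

lemma vertexOrbit_apply_mem (α : G ≃g G) {v w : V} (h : w ∈ vertexOrbit G v) :
    α w ∈ vertexOrbit G v := by
  obtain ⟨β, rfl⟩ := h
  exact ⟨β.trans α, rfl⟩

lemma vertexOrbit_symm_apply_mem (α : G ≃g G) {v w : V} (h : w ∈ vertexOrbit G v) :
    α.symm w ∈ vertexOrbit G v := by
  obtain ⟨β, rfl⟩ := h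
  exact ⟨β.trans α.symm, rfl⟩

lemma vertexOrbit_eq_of_mem {v w : V} (h : w ∈ vertexOrbit G v) :
    vertexOrbit G w = vertexOrbit G v := by
  obtain ⟨β, rfl⟩ := h
  ext z
  constructor
  · rintro ⟨γ, rfl⟩; exact ⟨β.trans γ, rfl⟩
  · rintro ⟨γ, rfl⟩; exact ⟨β.symm.trans γ, by simp⟩

variable [Fintype V]

open scoped Classical in
lemma mulVec_comp_eq_zero (x : V → ℝ) (hker : adjMat G *ᵥ x = 0) (α : G ≃g G) :
    adjMat G *ᵥ (fun v => x (α v)) = 0 := by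
  funext u
  have h0 : (adjMat G *ᵥ x) (α u) = 0 := by rw [hker]; rfl
  rw [Matrix.mulVec, dotProduct] at h0
  rw [← Equiv.sum_comp α.toEquiv (fun w => adjMat G (α u) w * x w)] at h0
  show ∑ v, adjMat G u v * x (α v) = 0
  rw [← h0]
  refine Finset.sum_congr rfl fun v _ => ?_
  have hiff : G.Adj (α.toEquiv u) (α.toEquiv v) ↔ G.Adj u v := α.map_rel_iff
  simp only [adjMat, Matrix.of_apply]
  show (if G.Adj u v then (1:ℝ) else 0) * x (α v) =
    (if G.Adj (α.toEquiv u) (α.toEquiv v) then (1:ℝ) else 0) * x (α.toEquiv v)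
  rw [if_congr hiff rfl rfl]
  rfl

lemma ker_scalar (h1 : Module.finrank ℝ (LinearMap.ker (Matrix.mulVecLin (adjMat G))) = 1)
    (x : V → ℝ) (hker : adjMat G *ᵥ x = 0) (hx : x ≠ 0) {y : V → ℝ}
    (hy : adjMat G *ᵥ y = 0) : ∃ c : ℝ, y = c • x := by
  set K := LinearMap.ker (Matrix.mulVecLin (adjMat G)) with hK
  have hxK : x ∈ K := by simpa [hK, LinearMap.mem_ker, Matrix.mulVecLin_apply] using hker
  have hyK : y ∈ K := by simpa [hK, LinearMap.mem_ker, Matrix.mulVecLin_apply] using hy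
  have hspan : Submodule.span ℝ {x} = K := by
    apply Submodule.eq_of_le_of_finrank_le (Submodule.span_le.2 (by simpa using hxK))
    rw [finrank_span_singleton hx, h1]
  have : y ∈ Submodule.span ℝ ({x} : Set (V → ℝ)) := hspan ▸ hyK
  obtain ⟨c, hc⟩ := Submodule.mem_span_singleton.1 this
  exact ⟨c, hc.symm⟩

lemma scalar_pm (x : V → ℝ) (hx : x ≠ 0) (α : G ≃g G) {c : ℝ}
    (hc : (fun v => x (α v)) = c • x) : c = 1 ∨ c = -1 := by
  have hS : 0 < ∑ v, x v * x v := by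
    obtain ⟨v, hv⟩ := Function.ne_iff.1 hx
    exact Finset.sum_pos' (fun i _ => mul_self_nonneg _)
      ⟨v, Finset.mem_univ v, mul_self_pos.2 hv⟩
  have h1 : ∑ v, x (α v) * x (α v) = ∑ v, x v * x v :=
    Equiv.sum_comp α.toEquiv (fun v => x v * x v)
  have h2 : ∑ v, x (α v) * x (α v) = (c * c) * ∑ v, x v * x v := by
    rw [Finset.mul_sum]
    refine Finset.sum_congr rfl fun v _ => ?_
    have := congrFun hc v
    simp only [Pi.smul_apply, smul_eq_mul] at this
    rw [this]; ring
  have hcc : c * c = 1 := by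
    have h3 := h2.symm.trans h1
    have h4 : (c * c - 1) * ∑ v, x v * x v = 0 := by rw [sub_mul, one_mul, h3, sub_self]
    rcases mul_eq_zero.1 h4 with h | h
    · linarith
    · exact absurd h (ne_of_gt hS)
  exact mul_self_eq_one_iff.1 hcc

end Aux

/-- If a nut graph has a vertex orbit which is an independent
set and which is a leaf of the vertex-orbit graph (it is joined by edges to
exactly one other orbit), then the kernel-vector entries sum to zero over every
vertex orbit; moreover each orbit has as many positive as negative entries, and
hence even size. -/
theorem nut_leaf_orbit_sums_zero {V : Type*} [Fintype V]
    (G : SimpleGraph V)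
    (hnut : IsNutGraph G)
    (x : V → ℝ) (hker : adjMat G *ᵥ x = 0) (hx : x ≠ 0)
    (O : Set V) (hO : O ∈ vertexOrbits G)
    (hindep : ∀ u ∈ O, ∀ w ∈ O, ¬ G.Adj u w)
    (hleaf : ∃! O' : Set V, O' ∈ vertexOrbits G ∧ O' ≠ O ∧
      ∃ u ∈ O, ∃ w ∈ O', G.Adj u w) :
    ∀ Oi ∈ vertexOrbits G,
      (∑ᶠ v ∈ Oi, x v = 0) ∧
      Nat.card {v : V | v ∈ Oi ∧ 0 < x v} = Nat.card {v : V | v ∈ Oi ∧ x v < 0} ∧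
      Even (Nat.card Oi) := by
  classical
  have hpm : ∀ α : G ≃g G, (∀ v, x (α v) = x v) ∨ (∀ v, x (α v) = -x v) := by
    intro α
    obtain ⟨c, hc⟩ := ker_scalar hnut.1 x hker hx (mulVec_comp_eq_zero x hker α)
    rcases scalar_pm x hx α hc with h | h
    · left; intro v
      have := congrFun hc v
      simpa [h] using this
    · right; intro v
      have := congrFun hc v
      simp only [h, Pi.smul_apply, smul_eq_mul] at this
      rw [this]; ring
  have hflip : ∃ α : G ≃g G, ∀ v, x (α v) = -x v := by
    by_contra hcon
    push_neg at hcon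
    have hconst : ∀ (α : G ≃g G) (v : V), x (α v) = x v := by
      intro α
      rcases hpm α with h | h
      · exact h
      · obtain ⟨v, hv⟩ := hcon α
        exact absurd (h v) hv
    obtain ⟨O', hP, huniq⟩ := hleaf
    obtain ⟨hO'orb, hO'ne, u, huO, w, hwO', hadj⟩ := hP
    have hxconstO' : ∀ z ∈ O', x z = x w := by
      intro z hz
      obtain ⟨v₁, hv₁⟩ := hO'orb
      rw [← hv₁] at hz hwO'
      have hzw : z ∈ vertexOrbit G w := by
        rw [vertexOrbit_eq_of_mem hwO']; exact hz
      obtain ⟨β, rfl⟩ := hzw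
      exact hconst β w
    have hneigh : ∀ v, G.Adj u v → x v = x w := by
      intro v hadjv
      have hvnotO : v ∉ O := fun hvO => hindep u huO v hvO hadjv
      have hOv : vertexOrbit G v = O' :=
        huniq _ ⟨⟨v, rfl⟩, fun h => hvnotO (h ▸ mem_vertexOrbit_self v),
          u, huO, v, mem_vertexOrbit_self v, hadjv⟩
      exact hxconstO' v (hOv ▸ mem_vertexOrbit_self v)
    have hsum0 : ∑ v, adjMat G u v * x v = 0 := by
      have h0 : (adjMat G *ᵥ x) u = 0 := by rw [hker]; rfl
      rw [Matrix.mulVec, dotProduct] at h0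
      exact h0
    have hsum' : (∑ v, adjMat G u v) * x w = 0 := by
      rw [Finset.sum_mul, ← hsum0]
      refine Finset.sum_congr rfl fun v _ => ?_
      by_cases h : G.Adj u v
      · rw [hneigh v h]
      · simp [adjMat, h]
    have hpos : 0 < ∑ v, adjMat G u v := by
      refine Finset.sum_pos' (fun v _ => ?_) ⟨w, Finset.mem_univ w, ?_⟩
      · simp only [adjMat, Matrix.of_apply]
        split <;> norm_num
      · simp only [adjMat, Matrix.of_apply, if_pos hadj]
        norm_num
    have hxw : x w = 0 := by
      rcases mul_eq_zero.1 hsum' with h | h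
      · exact absurd h (ne_of_gt hpos)
      · exact h
    exact hnut.2 x hker hx w hxw
  obtain ⟨α, hα⟩ := hflip
  intro Oi hOi
  obtain ⟨v₀, rfl⟩ := hOi
  have hmemiff : ∀ v, α v ∈ vertexOrbit G v₀ ↔ v ∈ vertexOrbit G v₀ := by
    intro v
    constructor
    · intro h
      have h2 := vertexOrbit_symm_apply_mem α h
      simpa using h2
    · exact vertexOrbit_apply_mem α
  have hfin : (vertexOrbit G v₀).Finite := Set.toFinite _
  set f : V → ℝ := fun v => if v ∈ vertexOrbit G v₀ then x v else 0 with hf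
  have hneg : ∀ v, f (α v) = -f v := by
    intro v
    by_cases h : v ∈ vertexOrbit G v₀
    · simp [hf, h, (hmemiff v).2 h, hα v]
    · have h2 : α v ∉ vertexOrbit G v₀ := fun hh => h ((hmemiff v).1 hh)
      simp [hf, h, h2]
  have hsumf : ∑ v, f v = 0 := by
    have h1 : ∑ v, f (α v) = ∑ v, f v := Equiv.sum_comp α.toEquiv f
    have h2 : ∑ v, f (α v) = -∑ v, f v := by
      rw [← Finset.sum_neg_distrib]
      exact Finset.sum_congr rfl fun v _ => hneg v
    have := h1.symm.trans h2
    linarith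
  have hsumOrbit : ∑ᶠ v ∈ vertexOrbit G v₀, x v = 0 := by
    have hcoe : vertexOrbit G v₀ = ↑hfin.toFinset := hfin.coe_toFinset.symm
    rw [hcoe, finsum_mem_coe_finset]
    have heq : hfin.toFinset = Finset.univ.filter (· ∈ vertexOrbit G v₀) := by
      ext v
      simp only [Set.Finite.mem_toFinset, Finset.mem_filter, Finset.mem_univ, true_and]
    rw [heq, Finset.sum_filter]
    exact hsumf
  have e : {v : V | v ∈ vertexOrbit G v₀ ∧ 0 < x v} ≃
      {v : V | v ∈ vertexOrbit G v₀ ∧ x v < 0} :=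
    { toFun := fun p => ⟨α p.1, vertexOrbit_apply_mem α p.2.1, by
        have := hα p.1
        rw [this]
        linarith [p.2.2]⟩
      invFun := fun n => ⟨α.symm n.1, vertexOrbit_symm_apply_mem α n.2.1, by
        have h1 : x (α (α.symm n.1)) = -x (α.symm n.1) := hα _
        rw [α.apply_symm_apply] at h1
        have := n.2.2
        linarith⟩
      left_inv := fun p => Subtype.ext (α.symm_apply_apply p.1)
      right_inv := fun n => Subtype.ext (α.apply_symm_apply n.1) }
  refine ⟨hsumOrbit, Nat.card_congr e, ?_⟩
  have hunion : {v : V | v ∈ vertexOrbit G v₀ ∧ 0 < x v} ∪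
      {v : V | v ∈ vertexOrbit G v₀ ∧ x v < 0} = vertexOrbit G v₀ := by
    ext v
    simp only [Set.mem_union, Set.mem_setOf_eq]
    constructor
    · rintro (⟨h, _⟩ | ⟨h, _⟩) <;> exact h
    · intro h
      rcases (hnut.2 x hker hx v).lt_or_gt with hlt | hgt
      · right; exact ⟨h, hlt⟩
      · left; exact ⟨h, hgt⟩
  have hdisj : Disjoint {v : V | v ∈ vertexOrbit G v₀ ∧ 0 < x v}
      {v : V | v ∈ vertexOrbit G v₀ ∧ x v < 0} := by
    rw [Set.disjoint_left]
    rintro v ⟨_, h1⟩ ⟨_, h2⟩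
    linarith
  have hncard : (vertexOrbit G v₀).ncard =
      {v : V | v ∈ vertexOrbit G v₀ ∧ 0 < x v}.ncard +
      {v : V | v ∈ vertexOrbit G v₀ ∧ x v < 0}.ncard := by
    conv_lhs => rw [← hunion]
    exact Set.ncard_union_eq hdisj (Set.toFinite _) (Set.toFinite _)
  have hcardeq : {v : V | v ∈ vertexOrbit G v₀ ∧ 0 < x v}.ncard =
      {v : V | v ∈ vertexOrbit G v₀ ∧ x v < 0}.ncard := by
    rw [← Nat.card_coe_set_eq, ← Nat.card_coe_set_eq]
    exact Nat.card_congr e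
  rw [Nat.card_coe_set_eq, hncard, hcardeq]
  exact ⟨_, rfl⟩

end NutPaper
end

section
/- For every even integer n ≥ 8, there exists a nut graph G on n vertices with exactly one vertex orbit and exactly two edge orbits, i.e., o_v(G) = 1 and o_e(G) = 2. -/
namespace NutPaper

open Matrix

variable {V : Type*}

/-!
The graph is the circulant graph on `ZMod N`, `N = 2q`, with jumps `a, b` such that `a + b` and
`a - b` are units and `2a, 2b ≠ 0` (for `N ≥ 8` take `b = ⌊N/4⌋`, `a = b - 1`). Writing `ψ` for
the standard character, its eigenvalue at frequency `k` is
`ψ(ak) + ψ(-ak) + ψ(bk) + ψ(-bk) = ψ(-ak) (ψ((a+b)k) + 1) (ψ((a-b)k) + 1)`,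
which vanishes iff `(a + b) k = q` or `(a - b) k = q`, i.e. iff `k = q`, because units of
`ZMod (2q)` are odd and hence fix `q`. So the kernel is spanned by the alternating vector
`(-1)^j`, which has no zero entry.

Translations act transitively on vertices and put every edge in the orbit of `{0, a}` or of
`{0, b}`. An automorphism maps the alternating vector to a multiple of itself, so it preserves
the product of its values at the two ends of an edge; this product is `-1` on `{0, a}` and `1` on
`{0, b}`, since `a + b` is odd.
-/

open SimpleGraph ZMod

section Graph

theorem adjMat_eq_adjMatrix (G : SimpleGraph V) [DecidableRel G.Adj] :
    adjMat G = G.adjMatrix ℝ := by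
  ext u v
  simp only [adjMat, adjMatrix, of_apply]
  congr

theorem adjMat_mulVec_comp_iso {W : Type*} [Fintype V] [Fintype W] {G : SimpleGraph V}
    {H : SimpleGraph W} (α : G ≃g H) (y : W → ℝ) :
    adjMat G *ᵥ (y ∘ α) = (adjMat H *ᵥ y) ∘ α := by
  classical
  ext v
  simp only [mulVec, dotProduct, Function.comp_apply, adjMat, of_apply]
  exact Fintype.sum_equiv α.toEquiv _ _ fun w => by
    simp only [RelIso.coe_fn_toEquiv]
    rw [if_congr α.map_adj_iff.symm rfl rfl]

theorem isNutGraph_of_ker_eq_span [Fintype V] [Nonempty V] {G : SimpleGraph V} {x : V → ℝ}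
    (hx : ∀ v, x v ≠ 0) (hker : LinearMap.ker (adjMat G).mulVecLin = Submodule.span ℝ {x}) :
    IsNutGraph G := by
  have hx0 : x ≠ 0 := fun h => hx (Classical.arbitrary V) (congrFun h _)
  refine ⟨by rw [hker, finrank_span_singleton hx0], fun y hy hy0 v => ?_⟩
  obtain ⟨c, rfl⟩ := Submodule.mem_span_singleton.1 (hker ▸ LinearMap.mem_ker.2 hy)
  exact mul_ne_zero (left_ne_zero_of_smul hy0) (hx v)

theorem mul_apply_iso_eq_of_ker_eq_span [Fintype V] {G : SimpleGraph V} {x : V → ℝ}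
    (hker : LinearMap.ker (adjMat G).mulVecLin = Submodule.span ℝ {x}) (hx : ∀ v, x v ^ 2 = 1)
    (α : G ≃g G) (u v : V) : x (α u) * x (α v) = x u * x v := by
  have hmem : x ∘ α ∈ Submodule.span ℝ {x} := by
    have hxker : adjMat G *ᵥ x = 0 := hker.ge (Submodule.mem_span_singleton_self x)
    rw [← hker, LinearMap.mem_ker, mulVecLin_apply, adjMat_mulVec_comp_iso, hxker]
    rfl
  obtain ⟨c, hc⟩ := Submodule.mem_span_singleton.1 hmem
  have hcomp (w : V) : x (α w) = c * x w := by rw [← Function.comp_apply (f := x), ← hc]; rfl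
  have hc2 : c ^ 2 = 1 := by simpa only [hcomp, mul_pow, hx, mul_one] using hx (α u)
  rw [hcomp, hcomp]
  linear_combination (x u * x v) * hc2

theorem numVertexOrbits_eq_one [Nonempty V] {G : SimpleGraph V}
    (h : ∀ u v, ∃ α : G ≃g G, α u = v) : numVertexOrbits G = 1 := by
  have horbit : vertexOrbit G = fun _ => Set.univ :=
    funext fun u => Set.eq_univ_of_forall fun v => h u v
  rw [numVertexOrbits, vertexOrbits, horbit, Set.range_const, Nat.card_unique]

theorem mem_edgeOrbit_self (G : SimpleGraph V) (e : Sym2 V) : e ∈ edgeOrbit G e :=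
  ⟨RelIso.refl _, by simp⟩

theorem edgeOrbit_eq_of_mem {G : SimpleGraph V} {e f : Sym2 V} (h : f ∈ edgeOrbit G e) :
    edgeOrbit G f = edgeOrbit G e := by
  obtain ⟨α, rfl⟩ := h
  ext g
  constructor
  · rintro ⟨β, rfl⟩
    exact ⟨α.trans β, by rw [Sym2.map_map]; rfl⟩
  · rintro ⟨β, rfl⟩
    refine ⟨α.symm.trans β, ?_⟩
    rw [Sym2.map_map]
    congr 1
    ext v
    simp

theorem numEdgeOrbits_eq_two {G : SimpleGraph V} {e f : Sym2 V} (he : e ∈ G.edgeSet)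
    (hf : f ∈ G.edgeSet) (hef : f ∉ edgeOrbit G e)
    (hcover : ∀ g ∈ G.edgeSet, g ∈ edgeOrbit G e ∨ g ∈ edgeOrbit G f) :
    numEdgeOrbits G = 2 := by
  have horbits : edgeOrbits G = {edgeOrbit G e, edgeOrbit G f} := by
    ext O
    constructor
    · rintro ⟨g, hg, rfl⟩
      exact (hcover g hg).imp edgeOrbit_eq_of_mem edgeOrbit_eq_of_mem
    · rintro (rfl | rfl)
      exacts [⟨e, he, rfl⟩, ⟨f, hf, rfl⟩]
  have hne : edgeOrbit G e ≠ edgeOrbit G f := fun h => hef (h ▸ mem_edgeOrbit_self G f)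
  rw [numEdgeOrbits, horbits, Nat.card_coe_set_eq, Set.ncard_pair hne]

end Graph

section Circulant

variable {G : Type*}

def circulantTranslate [AddGroup G] (s : Set G) (c : G) :
    circulantGraph s ≃g circulantGraph s where
  toEquiv := Equiv.addRight c
  map_rel_iff' := circulantGraph_adj_translate

@[simp]
theorem circulantTranslate_apply [AddGroup G] (s : Set G) (c v : G) :
    circulantTranslate s c v = v + c :=
  rfl

theorem numVertexOrbits_circulantGraph [AddGroup G] (s : Set G) :
    numVertexOrbits (circulantGraph s) = 1 :=
  numVertexOrbits_eq_one fun u v => ⟨circulantTranslate s (-u + v), by simp⟩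

theorem mem_edgeOrbit_circulantGraph [AddGroup G] {s : Set G} {u v c : G} (h : v - u = c) :
    s(u, v) ∈ edgeOrbit (circulantGraph s) s(0, c) :=
  ⟨circulantTranslate s u, by simp [← h]⟩

def jumpSum {M : Type*} [AddGroup G] [Add M] (a b : G) (y : G → M) : G → M :=
  fun i => y (i + a) + y (i - a) + y (i + b) + y (i - b)

theorem ofReal_jumpSum [AddGroup G] (a b : G) (y : G → ℝ) (i : G) :
    ((jumpSum a b y i : ℝ) : ℂ) = jumpSum a b (fun j => (y j : ℂ)) i := by
  simp only [jumpSum]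
  push_cast
  rfl

variable [AddCommGroup G] {a b : G}

theorem circulantGraph_pair_adj_iff (ha : a ≠ 0) (hb : b ≠ 0) {i j : G} :
    (circulantGraph {a, b}).Adj i j ↔ j = i + a ∨ j = i - a ∨ j = i + b ∨ j = i - b := by
  simp only [circulantGraph_adj, Set.mem_insert_iff, Set.mem_singleton_iff]
  grind

theorem mem_edgeOrbit_or_mem_edgeOrbit_circulantGraph (ha : a ≠ 0) (hb : b ≠ 0) {e : Sym2 G}
    (he : e ∈ (circulantGraph {a, b}).edgeSet) :
    e ∈ edgeOrbit (circulantGraph {a, b}) s(0, a) ∨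
      e ∈ edgeOrbit (circulantGraph {a, b}) s(0, b) := by
  induction e using Sym2.ind with
  | h u v =>
    rw [mem_edgeSet, circulantGraph_pair_adj_iff ha hb] at he
    rcases he with rfl | rfl | rfl | rfl
    · exact Or.inl (mem_edgeOrbit_circulantGraph (add_sub_cancel_left u a))
    · rw [Sym2.eq_swap (a := u)]
      exact Or.inl (mem_edgeOrbit_circulantGraph (sub_sub_cancel u a))
    · exact Or.inr (mem_edgeOrbit_circulantGraph (add_sub_cancel_left u b))
    · rw [Sym2.eq_swap (a := u)]
      exact Or.inr (mem_edgeOrbit_circulantGraph (sub_sub_cancel u b))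

theorem adjMat_circulantGraph_mulVec [Fintype G] (ha : a + a ≠ 0) (hb : b + b ≠ 0)
    (hab : a + b ≠ 0) (hab' : a - b ≠ 0) (y : G → ℝ) :
    adjMat (circulantGraph {a, b}) *ᵥ y = jumpSum a b y := by
  classical
  have ha0 : a ≠ 0 := by rintro rfl; simp at ha
  have hb0 : b ≠ 0 := by rintro rfl; simp at hb
  ext i
  have hnbr : (circulantGraph {a, b}).neighborFinset i = {i + a, i - a, i + b, i - b} := by
    ext j
    rw [mem_neighborFinset, circulantGraph_pair_adj_iff ha0 hb0]
    simp
  rw [adjMat_eq_adjMatrix, adjMatrix_mulVec_apply, hnbr, Finset.sum_insert, Finset.sum_insert,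
    Finset.sum_insert, Finset.sum_singleton, jumpSum]
  · ring
  all_goals grind

end Circulant

theorem AddChar.map_add_map_neg_add_map_add_map_neg {A R : Type*} [AddCommGroup A] [CommRing R]
    (χ : AddChar A R) (x y : A) :
    χ x + χ (-x) + χ y + χ (-y) = χ (-x) * (χ (x + y) + 1) * (χ (x - y) + 1) := by
  have h (u v w : A) (h : u + v = w) : χ u * χ v = χ w := by rw [← AddChar.map_add_eq_mul, h]
  linear_combination (-χ (x - y) - 1) * h (-x) (x + y) y (by abel) - h (-x) (x - y) (-y) (by abel)
    - h y (x - y) x (by abel)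

section Fourier

variable {N : ℕ} [NeZero N] {E : Type*} [AddCommGroup E] [Module ℂ E]

theorem dft_comp_add_right (Φ : ZMod N → E) (c k : ZMod N) :
    𝓕 (fun j => Φ (j + c)) k = stdAddChar (c * k) • 𝓕 Φ k := by
  rw [dft_apply, dft_apply, Finset.smul_sum]
  refine Fintype.sum_equiv (Equiv.addRight c) _ _ fun j => ?_
  rw [Equiv.coe_addRight, smul_smul, ← AddChar.map_add_eq_mul]
  congr 2
  ring

theorem eq_stdAddChar_smul_of_dft_eq_zero {Φ : ZMod N → E} {k₀ : ZMod N}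
    (h : ∀ k ≠ k₀, 𝓕 Φ k = 0) (j : ZMod N) : Φ j = stdAddChar (k₀ * j) • Φ 0 := by
  have hinv (i : ZMod N) : Φ i = (N : ℂ)⁻¹ • stdAddChar (k₀ * i) • 𝓕 Φ k₀ := by
    rw [← LinearEquiv.symm_apply_apply 𝓕 Φ, invDFT_apply, Finset.sum_eq_single k₀
      (fun k _ hk => by rw [h k hk, smul_zero]) (fun hk => absurd (Finset.mem_univ _) hk)]
    simp only [LinearEquiv.symm_apply_apply]
  rw [hinv j, hinv 0, mul_zero, AddChar.map_zero_eq_one, one_smul, smul_comm]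

end Fourier

section Half

variable {N q : ℕ} [NeZero N]

theorem stdAddChar_half (hN : N = 2 * q) : stdAddChar (q : ZMod N) = -1 := by
  have hq : (q : ℂ) ≠ 0 := by
    have := NeZero.ne N
    exact_mod_cast (by omega : q ≠ 0)
  rw [← Int.cast_natCast, stdAddChar_coe, hN]
  push_cast
  rw [show 2 * Real.pi * Complex.I * q / (2 * q) = Real.pi * Complex.I by field_simp,
    Complex.exp_pi_mul_I]

theorem stdAddChar_eq_neg_one_iff (hN : N = 2 * q) {z : ZMod N} :
    stdAddChar z = -1 ↔ z = q := by
  rw [← stdAddChar_half hN, injective_stdAddChar.eq_iff]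

theorem stdAddChar_half_mul (hN : N = 2 * q) (j : ZMod N) :
    stdAddChar ((q : ZMod N) * j) = (-1) ^ j.val := by
  rw [← stdAddChar_half hN, ← AddChar.map_nsmul_eq_pow, nsmul_eq_mul, natCast_zmod_val, mul_comm]

theorem mul_half_eq_half_of_isUnit (hN : N = 2 * q) {u : ZMod N} (hu : IsUnit u) :
    u * q = q := by
  obtain ⟨U, rfl⟩ := hu
  obtain ⟨t, ht⟩ : Odd (U : ZMod N).val :=
    ((val_coe_unit_coprime U).coprime_dvd_right (Dvd.intro q hN.symm)).odd_of_right
  calc (U : ZMod N) * q = ((t * N + q : ℕ) : ZMod N) := by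
        rw [← natCast_zmod_val (U : ZMod N), ht, hN]; push_cast; ring
    _ = q := by simp

theorem mul_eq_half_iff_of_isUnit (hN : N = 2 * q) {u k : ZMod N} (hu : IsUnit u) :
    u * k = q ↔ k = q := by
  conv_lhs => rw [← mul_half_eq_half_of_isUnit hN hu]
  exact hu.mul_right_inj

end Half

section Symbol

variable {N q : ℕ} [NeZero N] {a b : ZMod N}

noncomputable def circulantSymbol (a b k : ZMod N) : ℂ :=
  stdAddChar (a * k) + stdAddChar (-(a * k)) + stdAddChar (b * k) + stdAddChar (-(b * k))

theorem dft_jumpSum {E : Type*} [AddCommGroup E] [Module ℂ E] (Φ : ZMod N → E) (k : ZMod N) :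
    𝓕 (jumpSum a b Φ) k = circulantSymbol a b k • 𝓕 Φ k := by
  have hsplit : jumpSum a b Φ = (fun j => Φ (j + a)) + (fun j => Φ (j + -a)) +
      (fun j => Φ (j + b)) + (fun j => Φ (j + -b)) := by
    ext j
    simp only [jumpSum, Pi.add_apply, sub_eq_add_neg]
  simp only [hsplit, map_add, Pi.add_apply, dft_comp_add_right, circulantSymbol, add_smul, neg_mul]

theorem jumpSum_stdAddChar_mul (k i : ZMod N) :
    jumpSum a b (fun j => stdAddChar (k * j)) i = circulantSymbol a b k * stdAddChar (k * i) := by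
  simp only [jumpSum, circulantSymbol, add_mul, ← AddChar.map_add_eq_mul]
  ring_nf

theorem circulantSymbol_eq_zero_iff (hN : N = 2 * q) (hab : IsUnit (a + b))
    (hab' : IsUnit (a - b)) {k : ZMod N} : circulantSymbol a b k = 0 ↔ k = q := by
  rw [circulantSymbol, AddChar.map_add_map_neg_add_map_add_map_neg, mul_eq_zero, mul_eq_zero,
    or_assoc, or_iff_right (AddChar.val_isUnit stdAddChar (-(a * k))).ne_zero,
    add_eq_zero_iff_eq_neg, add_eq_zero_iff_eq_neg, ← add_mul, ← sub_mul,
    stdAddChar_eq_neg_one_iff hN, stdAddChar_eq_neg_one_iff hN,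
    mul_eq_half_iff_of_isUnit hN hab, mul_eq_half_iff_of_isUnit hN hab', or_self]

theorem eq_stdAddChar_mul_of_jumpSum_eq_zero (hN : N = 2 * q) (hab : IsUnit (a + b))
    (hab' : IsUnit (a - b)) {Y : ZMod N → ℂ} (hY : jumpSum a b Y = 0) (j : ZMod N) :
    Y j = stdAddChar ((q : ZMod N) * j) * Y 0 := by
  refine eq_stdAddChar_smul_of_dft_eq_zero (fun k hk => ?_) j
  have h := dft_jumpSum (a := a) (b := b) Y k
  rw [hY, map_zero, Pi.zero_apply, smul_eq_mul, eq_comm, mul_eq_zero] at h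
  exact h.resolve_left (mt (circulantSymbol_eq_zero_iff hN hab hab').1 hk)

end Symbol

section AltSign

variable {N q : ℕ}

def altSign (j : ZMod N) : ℝ := (-1) ^ j.val

theorem altSign_ne_zero (j : ZMod N) : altSign j ≠ 0 := pow_ne_zero _ (by norm_num)

theorem altSign_sq (j : ZMod N) : altSign j ^ 2 = 1 := by
  rw [altSign, ← pow_mul, pow_mul', neg_one_sq, one_pow]

variable [NeZero N]

theorem ofReal_altSign (hN : N = 2 * q) (j : ZMod N) :
    (altSign j : ℂ) = stdAddChar ((q : ZMod N) * j) := by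
  rw [stdAddChar_half_mul hN, altSign]
  push_cast
  rfl

theorem altSign_add (hN : N = 2 * q) (i j : ZMod N) : altSign (i + j) = altSign i * altSign j := by
  apply Complex.ofReal_injective
  push_cast
  simp only [ofReal_altSign hN, mul_add, AddChar.map_add_eq_mul]

theorem altSign_of_isUnit (hN : N = 2 * q) {u : ZMod N} (hu : IsUnit u) : altSign u = -1 := by
  apply Complex.ofReal_injective
  rw [ofReal_altSign hN, mul_comm, mul_half_eq_half_of_isUnit hN hu, stdAddChar_half hN]
  push_cast
  rfl

end AltSign

section Kernel

variable {N q : ℕ} [NeZero N] {a b : ZMod N}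

theorem jumpSum_altSign (hN : N = 2 * q) (hab : IsUnit (a + b)) (hab' : IsUnit (a - b)) :
    jumpSum a b (altSign : ZMod N → ℝ) = 0 := by
  ext i
  apply Complex.ofReal_injective
  rw [ofReal_jumpSum, funext (ofReal_altSign hN), jumpSum_stdAddChar_mul,
    (circulantSymbol_eq_zero_iff hN hab hab').2 rfl, zero_mul]
  rfl

theorem eq_smul_altSign_of_jumpSum_eq_zero (hN : N = 2 * q) (hab : IsUnit (a + b))
    (hab' : IsUnit (a - b)) {y : ZMod N → ℝ} (hy : jumpSum a b y = 0) : y = y 0 • altSign := by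
  ext j
  have hY : jumpSum a b (fun j => (y j : ℂ)) = 0 := by
    ext i
    rw [← ofReal_jumpSum, hy]
    rfl
  have h := eq_stdAddChar_mul_of_jumpSum_eq_zero hN hab hab' hY j
  rw [← ofReal_altSign hN] at h
  rw [Pi.smul_apply, smul_eq_mul, mul_comm]
  exact_mod_cast h

theorem ker_adjMat_circulantGraph (hN : N = 2 * q) (hab : IsUnit (a + b))
    (hab' : IsUnit (a - b)) (ha : a + a ≠ 0) (hb : b + b ≠ 0) :
    LinearMap.ker (adjMat (circulantGraph {a, b})).mulVecLin = Submodule.span ℝ {altSign} := by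
  have : Nontrivial (ZMod N) := ZMod.nontrivial_iff.2 (by omega)
  have hmulVec := adjMat_circulantGraph_mulVec ha hb hab.ne_zero hab'.ne_zero
  apply le_antisymm
  · intro y hy
    rw [LinearMap.mem_ker, mulVecLin_apply, hmulVec] at hy
    exact Submodule.mem_span_singleton.2
      ⟨y 0, (eq_smul_altSign_of_jumpSum_eq_zero hN hab hab' hy).symm⟩
  · rw [Submodule.span_le, Set.singleton_subset_iff, SetLike.mem_coe, LinearMap.mem_ker,
      mulVecLin_apply, hmulVec]
    exact jumpSum_altSign hN hab hab'

theorem isNutGraph_circulantGraph (hN : N = 2 * q) (hab : IsUnit (a + b))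
    (hab' : IsUnit (a - b)) (ha : a + a ≠ 0) (hb : b + b ≠ 0) :
    IsNutGraph (circulantGraph {a, b}) :=
  isNutGraph_of_ker_eq_span altSign_ne_zero (ker_adjMat_circulantGraph hN hab hab' ha hb)

theorem numEdgeOrbits_circulantGraph (hN : N = 2 * q) (hab : IsUnit (a + b))
    (hab' : IsUnit (a - b)) (ha : a + a ≠ 0) (hb : b + b ≠ 0) :
    numEdgeOrbits (circulantGraph {a, b}) = 2 := by
  have ha0 : a ≠ 0 := by rintro rfl; simp at ha
  have hb0 : b ≠ 0 := by rintro rfl; simp at hb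
  have hsign : altSign a ≠ altSign b := by
    intro h
    have h' := altSign_add hN a b
    rw [altSign_of_isUnit hN hab, ← h, ← sq, altSign_sq] at h'
    norm_num at h'
  refine numEdgeOrbits_eq_two (e := s(0, a)) (f := s(0, b)) ?_ ?_ ?_ ?_
  · rw [mem_edgeSet, circulantGraph_pair_adj_iff ha0 hb0]
    simp
  · rw [mem_edgeSet, circulantGraph_pair_adj_iff ha0 hb0]
    simp
  · rintro ⟨α, hα⟩
    have hinv := mul_apply_iso_eq_of_ker_eq_span (ker_adjMat_circulantGraph hN hab hab' ha hb)
      altSign_sq α 0 a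
    have h0 : altSign (0 : ZMod N) = 1 := by simp [altSign]
    rw [Sym2.map_mk, Sym2.eq_iff] at hα
    rcases hα with ⟨h1, h2⟩ | ⟨h1, h2⟩ <;> rw [h1, h2, h0] at hinv <;> simp at hinv <;>
      exact hsign hinv.symm
  · exact fun e he => mem_edgeOrbit_or_mem_edgeOrbit_circulantGraph ha0 hb0 he

end Kernel

theorem exists_isUnit_add_isUnit_sub {N : ℕ} (hN : Even N) (h8 : 8 ≤ N) :
    ∃ a b : ZMod N, IsUnit (a + b) ∧ IsUnit (a - b) ∧ a + a ≠ 0 ∧ b + b ≠ 0 := by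
  set k := N / 4 - 1
  have hcop : Nat.Coprime (2 * k + 1) N := by
    obtain ⟨c, hc4, hc⟩ : ∃ c, c ∣ 4 ∧ N = c + 2 * (2 * k + 1) := by
      obtain ⟨r, hr⟩ := hN
      rcases Nat.even_or_odd r with ⟨s, hs⟩ | ⟨s, hs⟩
      · exact ⟨2, by norm_num, by omega⟩
      · exact ⟨4, dvd_rfl, by omega⟩
    rw [hc, Nat.coprime_add_mul_right_right]
    exact ((Nat.coprime_two_right.2 (odd_two_mul_add_one k)).pow_right 2).coprime_dvd_right hc4
  have hne (m : ℕ) (hm : 0 < m) (hmN : m < N) : (m : ZMod N) ≠ 0 := by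
    rw [Ne, ZMod.natCast_eq_zero_iff]
    exact fun h => absurd (Nat.le_of_dvd hm h) (by omega)
  refine ⟨k, k + 1, ?_, ?_, ?_, ?_⟩
  · exact_mod_cast (ZMod.isUnit_iff_coprime _ _).2 (by convert hcop using 1; ring)
  · simp
  · exact_mod_cast hne (k + k) (by omega) (by omega)
  · exact_mod_cast hne (k + 1 + (k + 1)) (by omega) (by omega)

/-- For every even `n ≥ 8` there is a nut graph of order `n`
with exactly one vertex orbit and exactly two edge orbits. -/
theorem exists_nut_one_vertexOrbit_two_edgeOrbits (n : ℕ)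
    (hn : Even n) (hn8 : 8 ≤ n) :
    ∃ G : SimpleGraph (Fin n), IsNutGraph G ∧
      numVertexOrbits G = 1 ∧ numEdgeOrbits G = 2 := by
  obtain ⟨q, hq⟩ := hn.two_dvd
  obtain ⟨a, b, hab, hab', ha, hb⟩ := exists_isUnit_add_isUnit_sub hn hn8
  obtain ⟨m, rfl⟩ : ∃ m, n = m + 1 := ⟨n - 1, by omega⟩
  -- `ZMod (m + 1)` is by definition `Fin (m + 1)`
  exact ⟨circulantGraph {a, b}, isNutGraph_circulantGraph hq hab hab' ha hb,
    numVertexOrbits_circulantGraph _, numEdgeOrbits_circulantGraph hq hab hab' ha hb⟩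

end NutPaper
end

section
/- For every even integer ℓ ≥ 4 with ℓ not divisible by 6, the Cartesian product C_3 □ C_ℓ of a 3-cycle and an ℓ-cycle is a nut graph (of order 3ℓ). -/
/-!
Write a kernel vector `x` of `C₃ □ C_ℓ` as three rows `x (i, ·)` on `C_ℓ`. Subtracting the kernel
equations at two adjacent rows shows that their difference `f` is an eigenvector of `C_ℓ` for the
eigenvalue `1`. Then `f (k + 3) = -f k`, so `f` is `6`- and `ℓ`-periodic, hence `gcd 6 ℓ`-periodic,
and as `gcd 6 ℓ` divides `2` or `3` when `6 ∤ ℓ`, the recurrence then forces `f = 0`.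
So all rows agree, and the common row `r` is an eigenvector of `C_ℓ` for the eigenvalue `-2`;
pairing that equation with `r` gives `∑ (r (k + 1) + r k) ^ 2 = 0`, so `r` alternates in sign.
Hence the kernel is spanned by `(i, k) ↦ (-1) ^ k`, which for even `ℓ` is a nowhere-zero kernel
vector.
-/

namespace NutPaper

open Matrix

variable {V : Type*}

theorem _root_.Function.Periodic.gcd_nsmul {G β : Type*} [AddCommGroup G] {f : G → β} {c : G}
    {a b : ℕ} (ha : Function.Periodic f (a • c)) (hb : Function.Periodic f (b • c)) :
    Function.Periodic f (Nat.gcd a b • c) := by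
  have h : Nat.gcd a b • c = Nat.gcdA a b • (a • c) + Nat.gcdB a b • (b • c) := by
    rw [← natCast_zsmul, Nat.gcd_eq_gcd_ab, add_smul, mul_comm, mul_comm (b : ℤ), mul_smul,
      mul_smul, natCast_zsmul, natCast_zsmul]
  rw [h]
  exact (ha.zsmul _).add_period (hb.zsmul _)

section CycleEigenvectors

variable {G : Type*} [AddCommGroup G] {f : G → ℝ} {s : G}

theorem antiperiodic_of_sub_add_add_eq_neg_two_mul [Fintype G]
    (h : ∀ k, f (k - s) + f (k + s) = -2 * f k) : Function.Antiperiodic f s := by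
  have hshift : ∀ g : G → ℝ, ∑ k, g (k + s) = ∑ k, g k := fun g =>
    Fintype.sum_equiv (Equiv.addRight s) _ _ fun _ => rfl
  have hcross : ∑ k, f k * f (k - s) = ∑ k, f (k + s) * f k := by
    rw [← hshift]
    simp
  have hcross' : ∑ k, f k * f (k + s) = ∑ k, f (k + s) * f k :=
    Finset.sum_congr rfl fun k _ => mul_comm _ _
  -- Pairing the equation with `f` shows that `∑ (f (k + s) + f k) ^ 2` vanishes.
  have hpair : ∑ k, f k * (f (k - s) + f (k + s)) = -2 * ∑ k, f k ^ 2 := by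
    rw [Finset.mul_sum]
    refine Finset.sum_congr rfl fun k _ => ?_
    rw [h k]
    ring
  have hsq : ∑ k, (f (k + s) + f k) ^ 2 = 0 := by
    have hexpand : ∑ k, (f (k + s) + f k) ^ 2 =
        ∑ k, f (k + s) ^ 2 + ∑ k, f k ^ 2 + 2 * ∑ k, f (k + s) * f k := by
      rw [Finset.mul_sum, ← Finset.sum_add_distrib, ← Finset.sum_add_distrib]
      exact Finset.sum_congr rfl fun k _ => by ring
    simp only [mul_add, Finset.sum_add_distrib, hcross, hcross'] at hpair
    rw [hexpand, hshift fun k => f k ^ 2]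
    linarith
  intro k
  have hk := (Finset.sum_eq_zero_iff_of_nonneg fun k _ => sq_nonneg (f (k + s) + f k)).1 hsq k
    (Finset.mem_univ k)
  linarith [pow_eq_zero_iff (n := 2) two_ne_zero |>.1 hk]

theorem eq_zero_of_sub_add_add_eq_self {ℓ : ℕ} (hs : ℓ • s = 0) (h6 : ¬ 6 ∣ ℓ)
    (h : ∀ k, f (k - s) + f (k + s) = f k) : f = 0 := by
  have hrec : ∀ k, f (k + 2 • s) = f (k + s) - f k := fun k => by
    have := h (k + s)
    rw [add_sub_cancel_right, add_assoc, ← two_nsmul] at this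
    linarith
  have hanti : Function.Antiperiodic f (3 • s) := fun k => by
    rw [show k + 3 • s = k + s + 2 • s by abel, hrec, show k + s + s = k + 2 • s by abel,
      hrec]
    ring
  have h6per : Function.Periodic f (6 • s) := by
    simpa [smul_smul] using hanti.periodic
  have hℓper : Function.Periodic f (ℓ • s) := by
    simp [hs, Function.Periodic]
  have hgcd := h6per.gcd_nsmul hℓper
  have hg : Nat.gcd 6 ℓ ∣ 2 ∨ Nat.gcd 6 ℓ ∣ 3 := by
    have hdvd : Nat.gcd 6 ℓ ∣ 6 := Nat.gcd_dvd_left 6 ℓ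
    have hne : Nat.gcd 6 ℓ ≠ 6 := fun heq => h6 (heq ▸ Nat.gcd_dvd_right 6 ℓ)
    have hle : Nat.gcd 6 ℓ ≤ 6 := Nat.le_of_dvd (by norm_num) hdvd
    interval_cases hgv : Nat.gcd 6 ℓ <;> simp_all
  funext k
  rcases hg with ⟨t, ht⟩ | ⟨t, ht⟩
  · have h2 : Function.Periodic f (2 • s) := by
      simpa [ht, mul_comm, mul_smul] using hgcd.nsmul t
    -- `f (k + 2s) = f k` turns the recurrence into `f (k + s) = 2 f k`, while `f (k + 3s) = -f k`.
    have hdouble : ∀ k, f (k + s) = 2 * f k := fun k => by linarith [hrec k, h2 k]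
    have h3 := hanti k
    rw [show k + 3 • s = k + s + 2 • s by abel, h2, hdouble] at h3
    simp only [Pi.zero_apply]
    linarith
  · have h3 : Function.Periodic f (3 • s) := by
      simpa [ht, mul_comm, mul_smul] using hgcd.nsmul t
    simp only [Pi.zero_apply]
    linarith [h3 k, hanti k]

end CycleEigenvectors

theorem adjMat_mulVec_apply [Fintype V] (G : SimpleGraph V) (v : V) [Fintype (G.neighborSet v)]
    (x : V → ℝ) : (adjMat G *ᵥ x) v = ∑ u ∈ G.neighborFinset v, x u := by
  classical
  simp only [adjMat, mulVec, dotProduct, of_apply, ite_mul, one_mul, zero_mul,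
    Finset.sum_ite, Finset.sum_const_zero, add_zero]
  congr 1
  ext u
  simp

theorem adjMat_boxProd_mulVec_apply {α β : Type*} [Fintype α] [Fintype β] (G : SimpleGraph α)
    (H : SimpleGraph β) (x : α × β → ℝ) (a : α) (b : β) :
    (adjMat (G □ H) *ᵥ x) (a, b) =
      (adjMat G *ᵥ fun a' => x (a', b)) a + (adjMat H *ᵥ fun b' => x (a, b')) b := by
  classical
  rw [adjMat_mulVec_apply, adjMat_mulVec_apply, adjMat_mulVec_apply,
    SimpleGraph.neighborFinset_boxProd, Finset.sum_disjUnion, Finset.sum_product,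
    Finset.sum_product]
  simp

theorem adjMat_cycleGraph_mulVec_apply (n : ℕ) (f : Fin (n + 3) → ℝ) (k : Fin (n + 3)) :
    (adjMat (SimpleGraph.cycleGraph (n + 3)) *ᵥ f) k = f (k - 1) + f (k + 1) := by
  have hne : k - 1 ≠ k + 1 := by
    rw [Ne, sub_eq_iff_eq_add, add_assoc, left_eq_add, Fin.ext_iff, Fin.val_add, Fin.val_one,
      Nat.mod_eq_of_lt (by omega)]
    simp
  rw [adjMat_mulVec_apply, SimpleGraph.cycleGraph_neighborFinset, Finset.sum_pair hne]

theorem isNutGraph_of_ker_eq_span_singleton [Fintype V] [Nonempty V] {G : SimpleGraph V}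
    {w : V → ℝ} (hw : ∀ v, w v ≠ 0)
    (hker : LinearMap.ker (adjMat G).mulVecLin = Submodule.span ℝ {w}) : IsNutGraph G := by
  have hw0 : w ≠ 0 := fun h => hw (Classical.arbitrary V) (congrFun h _)
  refine ⟨by rw [hker]; exact finrank_span_singleton hw0, fun x hx hx0 v => ?_⟩
  have hmem : x ∈ Submodule.span ℝ {w} := by
    rw [← hker, LinearMap.mem_ker, mulVecLin_apply, hx]
  obtain ⟨c, rfl⟩ := Submodule.mem_span_singleton.1 hmem
  have hc : c ≠ 0 := by
    rintro rfl
    exact hx0 (zero_smul ℝ w)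
  exact mul_ne_zero hc (hw v)

section CycleBoxProdCycle

open SimpleGraph

variable {n : ℕ}

theorem adjMat_cycle3_boxProd_cycle_mulVec_apply (x : Fin 3 × Fin (n + 3) → ℝ) (i : Fin 3)
    (k : Fin (n + 3)) :
    (adjMat (cycleGraph 3 □ cycleGraph (n + 3)) *ᵥ x) (i, k) =
      x (i - 1, k) + x (i + 1, k) + (x (i, k - 1) + x (i, k + 1)) := by
  rw [adjMat_boxProd_mulVec_apply, adjMat_cycleGraph_mulVec_apply 0,
    adjMat_cycleGraph_mulVec_apply]

open Fin.CommRing in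
theorem cycle3_boxProd_cycle_row_eq_of_mulVec_eq_zero (h6 : ¬ 6 ∣ n + 3)
    {x : Fin 3 × Fin (n + 3) → ℝ}
    (hx : adjMat (cycleGraph 3 □ cycleGraph (n + 3)) *ᵥ x = 0) (i : Fin 3) (k : Fin (n + 3)) :
    x (i, k) = x (0, k) := by
  have heq i k := congrFun hx (i, k)
  simp only [adjMat_cycle3_boxProd_cycle_mulVec_apply, Pi.zero_apply] at heq
  have hwrap : ∀ j : Fin 3, j + 1 + 1 = j - 1 := by decide
  have hsucc (j : Fin 3) : (fun k => x (j, k)) = fun k => x (j + 1, k) := by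
    have hdiff := eq_zero_of_sub_add_add_eq_self (f := fun k => x (j, k) - x (j + 1, k))
      (s := (1 : Fin (n + 3))) (by rw [nsmul_one]; exact Fin.natCast_self _) h6 fun k => by
        have h1 := heq j k
        have h2 := heq (j + 1) k
        rw [show j + 1 - 1 = j by abel, hwrap] at h2
        linarith
    funext k
    exact sub_eq_zero.1 (congrFun hdiff k)
  fin_cases i
  · rfl
  · exact (congrFun (hsucc 0) k).symm
  · exact ((congrFun (hsucc 0) k).trans (congrFun (hsucc 1) k)).symm

theorem antiperiodic_neg_one_pow_val (he : Even (n + 3)) :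
    Function.Antiperiodic (fun k : Fin (n + 3) => (-1 : ℝ) ^ k.val) 1 := fun k => by
  have hval : (k + 1).val = (k.val + 1) % (n + 3) := by rw [Fin.val_add, Fin.val_one]
  dsimp only
  rw [hval, neg_one_pow_eq_pow_mod_two, Nat.mod_mod_of_dvd _ he.two_dvd,
    ← neg_one_pow_eq_pow_mod_two, pow_succ, mul_neg_one]

open Fin.CommRing in
theorem cycle3_boxProd_cycle_eq_smul_of_mulVec_eq_zero (h6 : ¬ 6 ∣ n + 3)
    {x : Fin 3 × Fin (n + 3) → ℝ}
    (hx : adjMat (cycleGraph 3 □ cycleGraph (n + 3)) *ᵥ x = 0) :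
    x = x (0, 0) • fun p => (-1 : ℝ) ^ p.2.val := by
  have hrows := cycle3_boxProd_cycle_row_eq_of_mulVec_eq_zero h6 hx
  have hanti : Function.Antiperiodic (fun k => x (0, k)) 1 :=
    antiperiodic_of_sub_add_add_eq_neg_two_mul fun k => by
      have h0 := congrFun hx (0, k)
      rw [adjMat_cycle3_boxProd_cycle_mulVec_apply, hrows (0 - 1), hrows (0 + 1)] at h0
      simp only [Pi.zero_apply] at h0
      linarith
  funext ⟨i, k⟩
  have hk := hanti.add_nsmul_eq (x := 0) k.val
  rw [zero_add, nsmul_one, Fin.cast_val_eq_self] at hk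
  simp [hrows, hk, mul_comm]

theorem adjMat_cycle3_boxProd_cycle_mulVec_neg_one_pow_val (he : Even (n + 3)) :
    adjMat (cycleGraph 3 □ cycleGraph (n + 3)) *ᵥ
      (fun p => (-1 : ℝ) ^ p.2.val) = 0 := by
  have hanti := antiperiodic_neg_one_pow_val he
  funext ⟨i, k⟩
  rw [adjMat_cycle3_boxProd_cycle_mulVec_apply]
  simp only [hanti.sub_eq, hanti k, Pi.zero_apply]
  ring

theorem ker_adjMat_cycle3_boxProd_cycle (he : Even (n + 3)) (h6 : ¬ 6 ∣ n + 3) :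
    LinearMap.ker (adjMat (cycleGraph 3 □ cycleGraph (n + 3))).mulVecLin =
      Submodule.span ℝ {fun p => (-1 : ℝ) ^ p.2.val} := by
  refine le_antisymm (fun x hx => ?_) ?_
  · rw [LinearMap.mem_ker, mulVecLin_apply] at hx
    exact Submodule.mem_span_singleton.2
      ⟨x (0, 0), (cycle3_boxProd_cycle_eq_smul_of_mulVec_eq_zero h6 hx).symm⟩
  · rw [Submodule.span_singleton_le_iff_mem, LinearMap.mem_ker, mulVecLin_apply]
    exact adjMat_cycle3_boxProd_cycle_mulVec_neg_one_pow_val he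

end CycleBoxProdCycle

/-- For every even `ℓ ≥ 4` not divisible by `6`, the Cartesian
(box) product `C₃ □ C_ℓ` is a nut graph. -/
theorem cycle3_boxProd_cycle_isNutGraph (ℓ : ℕ)
    (hl : Even ℓ) (hl4 : 4 ≤ ℓ) (hl6 : ¬ (6 ∣ ℓ)) :
    IsNutGraph ((SimpleGraph.cycleGraph 3) □ (SimpleGraph.cycleGraph ℓ)) := by
  obtain ⟨n, rfl⟩ : ∃ n, ℓ = n + 3 := ⟨ℓ - 3, by omega⟩
  exact isNutGraph_of_ker_eq_span_singleton (fun _ => pow_ne_zero _ (neg_ne_zero.2 one_ne_zero))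
    (ker_adjMat_cycle3_boxProd_cycle hl hl6)

end NutPaper
end

section
/- For every even integer ℓ ≥ 6 with ℓ divisible by 6, the twisted product C_3 ⋈ C_ℓ is a nut graph (of order 3ℓ). -/
namespace NutPaper

open Matrix

variable {V : Type*}

/-- The twisted product `C_k ⋈ C_ℓ`: the Cartesian product of the cycles `C_k`
and `C_ℓ` (with vertices labelled by `ZMod k × ZMod ℓ`), except that each edge
`(i,0)(i,1)` is removed and replaced by the edge `(i,0)(i+1,1)`. -/
def twistedProd (k ℓ : ℕ) : SimpleGraph (ZMod k × ZMod ℓ) :=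
  SimpleGraph.fromRel (fun p q =>
    (p.1 = q.1 ∧ q.2 = p.2 + 1 ∧ ¬(p.2 = 0 ∧ q.2 = 1)) ∨
    (p.2 = q.2 ∧ q.1 = p.1 + 1) ∨
    (p.2 = 0 ∧ q.2 = 1 ∧ q.1 = p.1 + 1))


section NutAux

set_option linter.unusedSectionVars false
set_option maxHeartbeats 1000000

variable {ℓ : ℕ} [NeZero ℓ]

private lemma np_cast_ne (hl : 6 ≤ ℓ) {m : ℕ} (h2 : 2 ≤ m) (hm : m < ℓ) :
    (m : ZMod ℓ) ≠ 0 ∧ (m : ZMod ℓ) ≠ 1 := by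
  haveI : Fact (1 < ℓ) := ⟨by omega⟩
  have hv : ((m : ZMod ℓ)).val = m := ZMod.val_cast_of_lt hm
  constructor
  · intro h; rw [h, ZMod.val_zero] at hv; omega
  · intro h; rw [h, ZMod.val_one] at hv; omega

private lemma np_adj_iff (hl : 6 ≤ ℓ) (i a : ZMod 3) (j b : ZMod ℓ) :
    (twistedProd 3 ℓ).Adj (i, j) (a, b) ↔
      ((a, b) = (i + 1, j) ∨ (a, b) = (i + 2, j) ∨
        (a, b) = ((if j = 1 then i + 2 else i), j - 1) ∨
        (a, b) = ((if j = 0 then i + 1 else i), j + 1)) := by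
  haveI : Fact (1 < ℓ) := ⟨by omega⟩
  have h10 : (1 : ZMod ℓ) ≠ 0 := one_ne_zero
  have h20 : (2 : ZMod ℓ) ≠ 0 := by
    have := (np_cast_ne hl (le_refl 2) (by omega)).1
    simpa using this
  have hjp : j + 1 ≠ j := by
    intro h; exact h10 (by linear_combination h)
  have hjm : j - 1 ≠ j := by
    intro h; exact h10 (by linear_combination -h)
  have hmp : j - 1 ≠ j + 1 := by
    intro h; exact h20 (by linear_combination -h)
  have z1 : ∀ z : ZMod 3, z ≠ z + 1 := by decide
  have z2 : ∀ z : ZMod 3, z ≠ z + 2 := by decide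
  have z3 : ∀ z : ZMod 3, z = z + 2 + 1 := by decide
  have z4 : ∀ z : ZMod 3, z = z + 1 + 2 := by decide
  simp only [twistedProd, SimpleGraph.fromRel_adj]
  constructor
  · rintro ⟨hne, h⟩
    rcases h with (⟨h1, h2, h3⟩ | ⟨h1, h2⟩ | ⟨h1, h2, h3⟩) | (⟨h1, h2, h3⟩ | ⟨h1, h2⟩ | ⟨h1, h2, h3⟩)
    · -- i = a, b = j + 1, ¬(j = 0 ∧ b = 1)
      subst h1; subst h2
      have hj0 : j ≠ 0 := by rintro rfl; exact h3 ⟨rfl, by rw [zero_add]⟩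
      right; right; right; rw [if_neg hj0]
    · subst h1; subst h2; left; rfl
    · -- j = 0, b = 1, a = i + 1
      subst h2; subst h3
      right; right; right; rw [if_pos h1, h1, zero_add]
    · -- a = i, j = b + 1, ¬(b = 0 ∧ j = 1)
      subst h1
      have hb : b = j - 1 := by linear_combination -h2
      subst hb
      have hj1 : j ≠ 1 := by
        rintro rfl
        exact h3 ⟨by rw [sub_self], rfl⟩
      right; right; left; rw [if_neg hj1]
    · -- b = j, i = a + 1
      subst h1
      have ha : a = i + 2 := by rw [h2]; exact z4 a
      subst ha; right; left; rfl
    · -- b = 0, j = 1, a such that i = a + 1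
      subst h1; subst h2
      have ha : a = i + 2 := by rw [h3]; exact z4 a
      subst ha
      right; right; left; rw [if_pos rfl, sub_self]
  · rintro (h | h | h | h)
    · rw [Prod.mk.injEq] at h
      obtain ⟨rfl, rfl⟩ := h
      refine ⟨?_, Or.inl (Or.inr (Or.inl ⟨rfl, rfl⟩))⟩
      simp only [ne_eq, Prod.mk.injEq, not_and]
      intro hi _; exact z1 i hi
    · rw [Prod.mk.injEq] at h
      obtain ⟨rfl, rfl⟩ := h
      refine ⟨?_, Or.inr (Or.inr (Or.inl ⟨rfl, z3 i⟩))⟩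
      · simp only [ne_eq, Prod.mk.injEq, not_and]
        intro hi _; exact z2 i hi
    · by_cases hj : j = 1
      · subst hj
        rw [if_pos rfl, sub_self, Prod.mk.injEq] at h
        obtain ⟨rfl, rfl⟩ := h
        refine ⟨?_, Or.inr (Or.inr (Or.inr ⟨rfl, rfl, z3 i⟩))⟩
        simp only [ne_eq, Prod.mk.injEq, not_and]
        intro _ h'; exact h10 h'
      · rw [if_neg hj, Prod.mk.injEq] at h
        obtain ⟨rfl, rfl⟩ := h
        refine ⟨?_, Or.inr (Or.inl ⟨rfl, by ring, ?_⟩)⟩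
        · simp only [ne_eq, Prod.mk.injEq, not_and]
          intro _ h'; exact hjm h'.symm
        · rintro ⟨_, h'⟩; exact hj h'
    · by_cases hj : j = 0
      · subst hj
        rw [if_pos rfl, zero_add, Prod.mk.injEq] at h
        obtain ⟨rfl, rfl⟩ := h
        refine ⟨?_, Or.inl (Or.inr (Or.inr ⟨rfl, rfl, rfl⟩))⟩
        simp only [ne_eq, Prod.mk.injEq, not_and]
        intro _ h'; exact h10 h'.symm
      · rw [if_neg hj, Prod.mk.injEq] at h
        obtain ⟨rfl, rfl⟩ := h
        refine ⟨?_, Or.inl (Or.inl ⟨rfl, rfl, ?_⟩)⟩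
        · simp only [ne_eq, Prod.mk.injEq, not_and]
          intro _ h'; exact hjp h'.symm
        · rintro ⟨h', _⟩; exact hj h'


private lemma np_mulVec (hl : 6 ≤ ℓ) (x : ZMod 3 × ZMod ℓ → ℝ) (i : ZMod 3) (j : ZMod ℓ) :
    (adjMat (twistedProd 3 ℓ) *ᵥ x) (i, j) =
      x (i + 1, j) + x (i + 2, j) + x ((if j = 1 then i + 2 else i), j - 1)
        + x ((if j = 0 then i + 1 else i), j + 1) := by
  classical
  haveI : Fact (1 < ℓ) := ⟨by omega⟩
  have h10 : (1 : ZMod ℓ) ≠ 0 := one_ne_zero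
  have h20 : (2 : ZMod ℓ) ≠ 0 := by
    have hv : ((2 : ℕ) : ZMod ℓ).val = 2 := ZMod.val_cast_of_lt (by omega)
    intro h
    rw [show ((2:ZMod ℓ)) = ((2:ℕ) : ZMod ℓ) by push_cast; ring] at h
    rw [h, ZMod.val_zero] at hv; omega
  have hjp : j + 1 ≠ j := fun h => h10 (by linear_combination h)
  have hjm : j - 1 ≠ j := fun h => h10 (by linear_combination -h)
  have hmp : j - 1 ≠ j + 1 := fun h => h20 (by linear_combination -h)
  have z5 : ∀ z : ZMod 3, z + 1 ≠ z + 2 := by decide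
  set S : Finset (ZMod 3 × ZMod ℓ) :=
    {(i + 1, j), (i + 2, j), ((if j = 1 then i + 2 else i), j - 1),
      ((if j = 0 then i + 1 else i), j + 1)} with hS
  have hset : ∀ u : ZMod 3 × ZMod ℓ, (twistedProd 3 ℓ).Adj (i, j) u ↔ u ∈ S := by
    rintro ⟨a, b⟩
    rw [np_adj_iff hl, hS]
    simp [Finset.mem_insert]
  have hterm : ∀ u : ZMod 3 × ZMod ℓ,
      adjMat (twistedProd 3 ℓ) (i, j) u * x u = if u ∈ S then x u else 0 := by
    intro u
    by_cases h : (twistedProd 3 ℓ).Adj (i, j) u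
    · rw [if_pos ((hset u).mp h)]
      simp [adjMat, h]
    · rw [if_neg (fun hm => h ((hset u).mpr hm))]
      simp [adjMat, h]
  have hsum : (adjMat (twistedProd 3 ℓ) *ᵥ x) (i, j) = ∑ u ∈ S, x u := by
    rw [show (adjMat (twistedProd 3 ℓ) *ᵥ x) (i, j)
        = ∑ u : ZMod 3 × ZMod ℓ, adjMat (twistedProd 3 ℓ) (i, j) u * x u from rfl]
    rw [Finset.sum_congr rfl (fun u _ => hterm u), Finset.sum_ite_mem, Finset.univ_inter]
  rw [hsum, hS]
  have hn1 : ((i + 1 : ZMod 3), j) ∉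
      ({((i + 2 : ZMod 3), j), ((if j = 1 then i + 2 else i), j - 1),
        ((if j = 0 then i + 1 else i), j + 1)} : Finset (ZMod 3 × ZMod ℓ)) := by
    simp only [Finset.mem_insert, Finset.mem_singleton, Prod.mk.injEq, not_or, not_and]
    exact ⟨fun h => absurd h (z5 i), fun _ h => hjm h.symm, fun _ h => hjp h.symm⟩
  have hn2 : ((i + 2 : ZMod 3), j) ∉
      ({((if j = 1 then i + 2 else i), j - 1),
        ((if j = 0 then i + 1 else i), j + 1)} : Finset (ZMod 3 × ZMod ℓ)) := by
    simp only [Finset.mem_insert, Finset.mem_singleton, Prod.mk.injEq, not_or, not_and]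
    exact ⟨fun _ h => hjm h.symm, fun _ h => hjp h.symm⟩
  have hn3 : (((if j = 1 then i + 2 else i) : ZMod 3), j - 1) ∉
      ({((if j = 0 then i + 1 else i), j + 1)} : Finset (ZMod 3 × ZMod ℓ)) := by
    simp only [Finset.mem_singleton, Prod.mk.injEq, not_and]
    exact fun _ => hmp
  rw [Finset.sum_insert hn1, Finset.sum_insert hn2, Finset.sum_insert hn3,
    Finset.sum_singleton]
  ring

private lemma np_ker (hl : 6 ≤ ℓ) (hdvd : 6 ∣ ℓ) (x : ZMod 3 × ZMod ℓ → ℝ)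
    (hx : ∀ (i : ZMod 3) (j : ZMod ℓ),
      x (i + 1, j) + x (i + 2, j) + x ((if j = 1 then i + 2 else i), j - 1)
        + x ((if j = 0 then i + 1 else i), j + 1) = 0) :
    ∀ (i : ZMod 3) (j : ZMod ℓ), x (i, j) = (-1 : ℝ) ^ j.val * x (0, 0) := by
  haveI : Fact (1 < ℓ) := ⟨by omega⟩
  have h10 : (1 : ZMod ℓ) ≠ 0 := one_ne_zero
  have h01 : (0 : ZMod ℓ) ≠ 1 := fun h => h10 h.symm
  have hne : ∀ m : ℕ, 2 ≤ m → m < ℓ → (m : ZMod ℓ) ≠ 0 ∧ (m : ZMod ℓ) ≠ 1 := by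
    intro m h2 hm
    have hv : ((m : ZMod ℓ)).val = m := ZMod.val_cast_of_lt hm
    constructor
    · intro h; rw [h, ZMod.val_zero] at hv; omega
    · intro h; rw [h, ZMod.val_one] at hv; omega
  have z31 : ∀ z : ZMod 3, z + 1 + 1 = z + 2 := by decide
  have z32 : ∀ z : ZMod 3, z + 1 + 2 = z := by decide
  have z33 : ∀ z : ZMod 3, z + 2 + 1 = z := by decide
  set d : ZMod ℓ → ZMod 3 → ℝ := fun j i => x (i, j) - x (i + 1, j) with hd
  have hsum : ∀ (j : ZMod ℓ) (i : ZMod 3), d j i + d j (i + 1) + d j (i + 2) = 0 := by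
    intro j i
    simp only [hd]
    rw [z31 i, z33 i]
    ring
  -- generic recurrence
  have hG : ∀ j : ZMod ℓ, j ≠ 0 → j ≠ 1 → ∀ i, d (j + 1) i = d j i - d (j - 1) i := by
    intro j hj0 hj1 i
    have e1 := hx i j
    have e2 := hx (i + 1) j
    rw [if_neg hj1, if_neg hj0] at e1 e2
    rw [z31 i, z32 i] at e2
    simp only [hd]
    linarith
  -- relation at j = 1
  have hJ1 : ∀ i, d (1 + 1) i = d 1 i - d 0 (i + 2) := by
    intro i
    have e1 := hx i 1
    have e2 := hx (i + 1) 1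
    rw [if_pos rfl, if_neg h10, sub_self] at e1 e2
    rw [z31 i, z32 i] at e2
    simp only [hd]
    rw [z33 i]
    linarith
  -- relation at j = 0
  have hJ0 : ∀ i, d 0 i = d (0 - 1) i + d 1 (i + 1) := by
    intro i
    have e1 := hx i 0
    have e2 := hx (i + 1) 0
    rw [if_neg h01, if_pos rfl, zero_add] at e1 e2
    rw [z31 i, z32 i] at e2
    simp only [hd]
    rw [z31 i]
    linarith
  set F : ℕ → ZMod 3 → ℝ := fun n i =>
    if n % 6 = 0 then d 0 (i + 2) else if n % 6 = 1 then d 1 i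
    else if n % 6 = 2 then d 1 i - d 0 (i + 2) else if n % 6 = 3 then -d 0 (i + 2)
    else if n % 6 = 4 then -d 1 i else d 0 (i + 2) - d 1 i with hF
  have hFrec : ∀ n i, F (n + 2) i = F (n + 1) i - F n i := by
    intro n i
    have h0 : n % 6 < 6 := Nat.mod_lt _ (by norm_num)
    interval_cases h : n % 6 <;>
      · have e1 : (n + 1) % 6 = (n % 6 + 1) % 6 := by omega
        have e2 : (n + 2) % 6 = (n % 6 + 2) % 6 := by omega
        simp only [hF, h, e1, e2]
        norm_num
        try ring
  have hC : ∀ n : ℕ, 1 ≤ n → n ≤ ℓ → ∀ i, d ((n : ℕ) : ZMod ℓ) i = F n i := by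
    intro n
    induction n using Nat.strong_induction_on with
    | _ n ih =>
      intro h1 h2 i
      rcases Nat.lt_or_ge n 3 with h3 | h3
      · interval_cases n
        · simp only [Nat.cast_one, hF]
          norm_num
        · rw [show ((2 : ℕ) : ZMod ℓ) = 1 + 1 by push_cast; ring, hJ1 i]
          simp only [hF]
          norm_num
      · have hc1 : ((n : ℕ) : ZMod ℓ) = ((n - 1 : ℕ) : ZMod ℓ) + 1 := by
          have : ((n - 1 : ℕ) : ZMod ℓ) = (n : ZMod ℓ) - 1 := by
            push_cast [Nat.cast_sub (by omega : 1 ≤ n)]; ring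
          rw [this]; ring
        have hc2 : ((n - 1 : ℕ) : ZMod ℓ) - 1 = ((n - 2 : ℕ) : ZMod ℓ) := by
          push_cast [Nat.cast_sub (by omega : 1 ≤ n), Nat.cast_sub (by omega : 2 ≤ n)]
          ring
        have hne1 := hne (n - 1) (by omega) (by omega)
        have hrec := hG ((n - 1 : ℕ) : ZMod ℓ) hne1.1 hne1.2 i
        rw [hc2] at hrec
        rw [hc1, hrec, ih (n - 1) (by omega) (by omega) (by omega) i,
          ih (n - 2) (by omega) (by omega) (by omega) i]
        have e := hFrec (n - 2) i
        rw [show n - 2 + 2 = n by omega, show n - 2 + 1 = n - 1 by omega] at e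
        linarith
  have hmod0 : ℓ % 6 = 0 := by omega
  have hd0 : ∀ i, d 0 i = 0 := by
    have hper : ∀ i, d 0 i = d 0 (i + 2) := by
      intro i
      have h1 := hC ℓ (by omega) le_rfl i
      rw [ZMod.natCast_self] at h1
      simp only [hF, hmod0] at h1
      simpa using h1
    intro i
    have ha := hper i
    have hb := hper (i + 1)
    rw [z32 i] at hb
    have hs := hsum 0 i
    linarith
  have hd1 : ∀ i, d 1 i = 0 := by
    have hm5 : (ℓ - 1) % 6 = 5 := by omega
    have hcast : ((ℓ - 1 : ℕ) : ZMod ℓ) = 0 - 1 := by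
      push_cast [Nat.cast_sub (by omega : 1 ≤ ℓ)]
      rw [ZMod.natCast_self]
    have hstep : ∀ i, d 1 (i + 1) = d 1 i := by
      intro i
      have h1 := hC (ℓ - 1) (by omega) (by omega) i
      rw [hcast] at h1
      simp only [hF, hm5] at h1
      norm_num at h1
      have h2 := hJ0 i
      rw [zero_sub] at h2
      have h3 := hd0 i
      have h4 := hd0 (i + 2)
      -- h1 : d (0-1) i = d 0 (i+2) - d 1 i
      linarith
    intro i
    have ha := hstep i
    have hb := hstep (i + 1)
    rw [z31 i] at hb
    have hs := hsum 1 i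
    linarith
  have hdall : ∀ (j : ZMod ℓ) (i : ZMod 3), d j i = 0 := by
    intro j i
    by_cases hj : j.val = 0
    · have : j = 0 := by
        have := ZMod.natCast_rightInverse (n := ℓ) j
        rw [hj] at this
        simpa using this.symm
      rw [this]; exact hd0 i
    · have hlt := ZMod.val_lt j
      have h := hC j.val (by omega) (by omega) i
      rw [ZMod.natCast_rightInverse (n := ℓ) j] at h
      rw [h]
      simp only [hF]
      split_ifs <;> simp [hd0, hd1]
  have heq0 : ∀ (i : ZMod 3) (j : ZMod ℓ), x (i, j) = x (0, j) := by
    have hz : ∀ z : ZMod 3, z = 0 ∨ z = 1 ∨ z = 2 := by decide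
    intro i j
    have h0 := hdall j 0
    have h1 := hdall j 1
    simp only [hd] at h0 h1
    rw [show ((0 : ZMod 3) + 1) = 1 by decide] at h0
    rw [show ((1 : ZMod 3) + 1) = 2 by decide] at h1
    rcases hz i with rfl | rfl | rfl
    · rfl
    · linarith
    · linarith
  have ht : ∀ j : ZMod ℓ, x (0, j + 1) = -2 * x (0, j) - x (0, j - 1) := by
    intro j
    have e := hx 0 j
    rw [heq0 (0 + 1) j, heq0 (0 + 2) j,
      heq0 (if j = 1 then 0 + 2 else 0) (j - 1), heq0 (if j = 0 then 0 + 1 else 0) (j + 1)] at e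
    linarith
  set b : ℝ := -x (0, 0) - x (0, 1) with hb
  have hT : ∀ n : ℕ, x (0, ((n : ℕ) : ZMod ℓ)) = (-1 : ℝ) ^ n * (x (0, 0) + n * b) ∧
      x (0, ((n + 1 : ℕ) : ZMod ℓ)) = (-1 : ℝ) ^ (n + 1) * (x (0, 0) + (n + 1 : ℕ) * b) := by
    intro n
    induction n with
    | zero =>
      constructor
      · simp
      · rw [Nat.cast_one, Nat.cast_one, hb]
        push_cast
        ring
    | succ n ih =>
      refine ⟨ih.2, ?_⟩
      have e := ht ((n + 1 : ℕ) : ZMod ℓ)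
      have c1 : ((n + 1 : ℕ) : ZMod ℓ) + 1 = ((n + 1 + 1 : ℕ) : ZMod ℓ) := by push_cast; ring
      have c2 : ((n + 1 : ℕ) : ZMod ℓ) - 1 = ((n : ℕ) : ZMod ℓ) := by push_cast; ring
      rw [c1, c2] at e
      rw [e, ih.1, ih.2]
      push_cast
      ring
  have hb0 : b = 0 := by
    have e := (hT ℓ).1
    rw [ZMod.natCast_self] at e
    have hev : (-1 : ℝ) ^ ℓ = 1 := Even.neg_one_pow (Nat.even_iff.mpr (by omega))
    rw [hev, one_mul] at e
    have hl0 : ((ℓ : ℝ)) ≠ 0 := Nat.cast_ne_zero.mpr (by omega)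
    have : (ℓ : ℝ) * b = 0 := by linarith
    rcases mul_eq_zero.mp this with h | h
    · exact absurd h hl0
    · exact h
  intro i j
  rw [heq0 i j]
  have e := (hT j.val).1
  rw [ZMod.natCast_rightInverse (n := ℓ) j] at e
  rw [e, hb0]
  ring


end NutAux

/-- For every even `ℓ ≥ 6` divisible by `6`, the twisted
product `C₃ ⋈ C_ℓ` is a nut graph. -/
theorem twistedProd_isNutGraph (ℓ : ℕ) [NeZero ℓ]
    (hl : Even ℓ) (hl6 : 6 ≤ ℓ) (hdvd : 6 ∣ ℓ) :
    IsNutGraph (twistedProd 3 ℓ) := by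
  haveI : Fact (1 < ℓ) := ⟨by omega⟩
  have hs1 : ∀ j : ZMod ℓ, (-1 : ℝ) ^ ((j + 1).val) = -(-1 : ℝ) ^ j.val := by
    intro j
    have hmod : ∀ m : ℕ, (-1 : ℝ) ^ (m % ℓ) = (-1) ^ m := by
      intro m
      conv_rhs => rw [← Nat.div_add_mod m ℓ]
      rw [pow_add, pow_mul, hl.neg_one_pow, one_pow, one_mul]
    rw [ZMod.val_add, ZMod.val_one, hmod, pow_succ]
    ring
  have hs2 : ∀ j : ZMod ℓ, (-1 : ℝ) ^ ((j - 1).val) = -(-1 : ℝ) ^ j.val := by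
    intro j
    have h := hs1 (j - 1)
    rw [sub_add_cancel] at h
    linarith
  set y : ZMod 3 × ZMod ℓ → ℝ := fun v => (-1 : ℝ) ^ (v.2.val) with hy
  have hy0 : adjMat (twistedProd 3 ℓ) *ᵥ y = 0 := by
    funext v
    obtain ⟨i, j⟩ := v
    rw [np_mulVec (by omega)]
    simp only [hy, Pi.zero_apply]
    rw [hs1 j, hs2 j]
    ring
  have key : ∀ x : (ZMod 3 × ZMod ℓ) → ℝ, adjMat (twistedProd 3 ℓ) *ᵥ x = 0 →
      ∀ (i : ZMod 3) (j : ZMod ℓ), x (i, j) = (-1 : ℝ) ^ j.val * x (0, 0) := by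
    intro x hx
    refine np_ker hl6 hdvd x ?_
    intro i j
    have := congrFun hx (i, j)
    rw [np_mulVec (by omega)] at this
    simpa using this
  constructor
  · have hker : LinearMap.ker (Matrix.mulVecLin (adjMat (twistedProd 3 ℓ)))
        = Submodule.span ℝ {y} := by
      apply le_antisymm
      · intro x hxk
        rw [LinearMap.mem_ker, Matrix.mulVecLin_apply] at hxk
        have hxy := key x hxk
        rw [Submodule.mem_span_singleton]
        refine ⟨x (0, 0), ?_⟩
        funext v
        obtain ⟨i, j⟩ := v
        rw [Pi.smul_apply, hy, smul_eq_mul, hxy i j]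
        ring
      · rw [Submodule.span_le, Set.singleton_subset_iff]
        exact LinearMap.mem_ker.mpr (by rw [Matrix.mulVecLin_apply]; exact hy0)
    rw [hker]
    refine finrank_span_singleton ?_
    intro h
    have := congrFun h (0, 0)
    simp [hy, ZMod.val_zero] at this
  · intro x hx hne v
    have hxy := key x hx
    have h00 : x (0, 0) ≠ 0 := by
      intro h0
      apply hne
      funext w
      obtain ⟨i, j⟩ := w
      rw [hxy i j, h0, mul_zero]; rfl
    obtain ⟨i, j⟩ := v
    rw [hxy i j]
    exact mul_ne_zero (pow_ne_zero _ (by norm_num)) h00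


end NutPaper
end

section
/- For every n ≥ 3, the graph T_n obtained from an n-cycle by fusing a triangle to every vertex (i.e., for each cycle vertex v, adding two new vertices forming a triangle with v) is a nut graph (of order 3n). -/
namespace NutPaper

open Matrix

variable {V : Type*}

/-- The graph `T_n`: an `n`-cycle with a triangle fused to every vertex.
Vertex `(i, 0)` is the `i`-th cycle vertex `c_i`, and `(i, 1)`, `(i, 2)` are
the two extra vertices `a_i`, `b_i` forming a triangle with `c_i`. -/
def triangleCycle (n : ℕ) : SimpleGraph (ZMod n × Fin 3) :=
  SimpleGraph.fromRel (fun p q =>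
    (p.2 = 0 ∧ q.2 = 0 ∧ q.1 = p.1 + 1) ∨
    (p.1 = q.1 ∧ p.2 = 0 ∧ (q.2 = 1 ∨ q.2 = 2)) ∨
    (p.1 = q.1 ∧ p.2 = 1 ∧ q.2 = 2))

variable {n : ℕ} [NeZero n]


lemma adj1 (i j : ZMod n) (k : Fin 3) :
    (triangleCycle n).Adj (i,1) (j,k) ↔ (j = i ∧ k ≠ 1) := by
  fin_cases k <;>
  simp [triangleCycle, SimpleGraph.fromRel_adj, Prod.ext_iff, eq_comm, and_comm]

lemma adj2 (i j : ZMod n) (k : Fin 3) :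
    (triangleCycle n).Adj (i,2) (j,k) ↔ (j = i ∧ k ≠ 2) := by
  fin_cases k <;>
  simp [triangleCycle, SimpleGraph.fromRel_adj, Prod.ext_iff, eq_comm, and_comm]

lemma adj0 (i j : ZMod n) (k : Fin 3) :
    (triangleCycle n).Adj (i,0) (j,k) ↔
      (k = 0 ∧ j ≠ i ∧ (j = i + 1 ∨ i = j + 1)) ∨ (k ≠ 0 ∧ j = i) := by
  fin_cases k <;>
  simp [triangleCycle, SimpleGraph.fromRel_adj, Prod.ext_iff, eq_comm, and_comm, or_comm]

lemma rowA (x : ZMod n × Fin 3 → ℝ) (i : ZMod n) :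
    (adjMat (triangleCycle n) *ᵥ x) (i, 1) = x (i,0) + x (i,2) := by
  classical
  have hA : ∀ (j : ZMod n) (k : Fin 3),
      adjMat (triangleCycle n) (i,1) (j,k) = if j = i ∧ k ≠ 1 then 1 else 0 := by
    intro j k
    simp only [adjMat, Matrix.of_apply, adj1]
  simp only [Matrix.mulVec, dotProduct, Fintype.sum_prod_type, hA]
  simp [Fin.sum_univ_three, ite_mul, Finset.sum_add_distrib, Finset.sum_ite_eq']

lemma rowB (x : ZMod n × Fin 3 → ℝ) (i : ZMod n) :
    (adjMat (triangleCycle n) *ᵥ x) (i, 2) = x (i,0) + x (i,1) := by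
  classical
  have hA : ∀ (j : ZMod n) (k : Fin 3),
      adjMat (triangleCycle n) (i,2) (j,k) = if j = i ∧ k ≠ 2 then 1 else 0 := by
    intro j k
    simp only [adjMat, Matrix.of_apply, adj2]
  simp only [Matrix.mulVec, dotProduct, Fintype.sum_prod_type, hA]
  simp [Fin.sum_univ_three, ite_mul, Finset.sum_add_distrib, Finset.sum_ite_eq']

lemma one_ne (hn : 3 ≤ n) : ((1:ℕ) : ZMod n) ≠ 0 := by
  rw [Ne, ZMod.natCast_eq_zero_iff]
  intro h; have := Nat.le_of_dvd one_pos h; omega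

lemma two_ne (hn : 3 ≤ n) : ((2:ℕ) : ZMod n) ≠ 0 := by
  rw [Ne, ZMod.natCast_eq_zero_iff]
  intro h; have := Nat.le_of_dvd two_pos h; omega

lemma rowC (hn : 3 ≤ n) (x : ZMod n × Fin 3 → ℝ) (i : ZMod n) :
    (adjMat (triangleCycle n) *ᵥ x) (i, 0)
      = x (i+1,0) + x (i-1,0) + x (i,1) + x (i,2) := by
  classical
  have h1 : i + 1 ≠ i := fun h => one_ne hn (by push_cast; linear_combination h)
  have h2 : i - 1 ≠ i := fun h => one_ne hn (by push_cast; linear_combination -h)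
  have h3 : i + 1 ≠ i - 1 := fun h => two_ne hn (by push_cast; linear_combination h)
  have hA : ∀ (j : ZMod n) (k : Fin 3),
      adjMat (triangleCycle n) (i,0) (j,k)
        = if (k = 0 ∧ j ≠ i ∧ (j = i + 1 ∨ i = j + 1)) ∨ (k ≠ 0 ∧ j = i) then 1 else 0 := by
    intro j k
    simp only [adjMat, Matrix.of_apply, adj0]
  have key : ∀ j : ZMod n,
      (if j ≠ i ∧ (j = i + 1 ∨ i = j + 1) then x (j,0) else 0)
        = (if j = i + 1 then x (j,0) else 0) + (if j = i - 1 then x (j,0) else 0) := by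
    intro j
    by_cases hj1 : j = i + 1 <;> by_cases hj2 : j = i - 1
    · exact absurd (hj1 ▸ hj2) h3
    · subst hj1; simp [h1, hj2]
    · subst hj2; simp [h2, hj1, sub_add_cancel]
    · have hj3 : i ≠ j + 1 := fun h => hj2 (by rw [h]; ring)
      simp [hj1, hj2, hj3]
  simp only [Matrix.mulVec, dotProduct, Fintype.sum_prod_type, hA]
  simp only [Fin.sum_univ_three, ite_mul, one_mul, zero_mul]
  simp only [show ((0:Fin 3) = 0) = True by simp, show ((1:Fin 3) = 0) = False by simp,
    show ((2:Fin 3) = 0) = False by simp, show ((0:Fin 3) ≠ 0) = False by simp,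
    show ((1:Fin 3) ≠ 0) = True by simp, show ((2:Fin 3) ≠ 0) = True by simp,
    true_and, false_and, false_or, or_false, and_true, if_false, if_true]
  simp only [key]
  simp [Finset.sum_add_distrib, Finset.sum_ite_eq']



/-- The canonical kernel vector. -/
noncomputable def kvec (n : ℕ) : ZMod n × Fin 3 → ℝ :=
  fun p => if p.2 = 0 then 1 else -1

lemma kvec_ker (hn : 3 ≤ n) : adjMat (triangleCycle n) *ᵥ kvec n = 0 := by
  funext p
  obtain ⟨i, k⟩ := p
  fin_cases k
  · show (adjMat (triangleCycle n) *ᵥ kvec n) (i, 0) = 0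
    rw [rowC hn]; simp [kvec]
  · show (adjMat (triangleCycle n) *ᵥ kvec n) (i, 1) = 0
    rw [rowA]; simp [kvec]
  · show (adjMat (triangleCycle n) *ᵥ kvec n) (i, 2) = 0
    rw [rowB]; simp [kvec]

lemma ker_eq (hn : 3 ≤ n) (x : ZMod n × Fin 3 → ℝ)
    (hx : adjMat (triangleCycle n) *ᵥ x = 0) : x = x (0,0) • kvec n := by
  have hab : ∀ i : ZMod n, x (i,1) = -x (i,0) ∧ x (i,2) = -x (i,0) := by
    intro i
    have h1 := rowA x i; have h2 := rowB x i
    rw [hx] at h1 h2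
    simp only [Pi.zero_apply] at h1 h2
    constructor <;> linarith
  have hrec : ∀ i : ZMod n, x (i+1,0) + x (i-1,0) = 2 * x (i,0) := by
    intro i
    have h := rowC hn x i
    rw [hx] at h
    simp only [Pi.zero_apply] at h
    have := (hab i).1; have := (hab i).2
    linarith
  set c : ℕ → ℝ := fun m => x ((m : ZMod n), 0) with hc_def
  have hc : ∀ m : ℕ, c (m+2) = 2 * c (m+1) - c m := by
    intro m
    have h := hrec ((m+1 : ℕ) : ZMod n)
    have e1 : ((m+1:ℕ):ZMod n) + 1 = ((m+2:ℕ):ZMod n) := by push_cast; ring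
    have e2 : ((m+1:ℕ):ZMod n) - 1 = ((m:ℕ):ZMod n) := by push_cast; ring
    rw [e1, e2] at h
    simp only [hc_def]
    linarith
  have hd : ∀ m : ℕ, c (m+1) - c m = c 1 - c 0 := by
    intro m
    induction m with
    | zero => rfl
    | succ k ih => have := hc k; linarith
  have hsum : ∀ m : ℕ, c m = c 0 + m * (c 1 - c 0) := by
    intro m
    induction m with
    | zero => simp
    | succ k ih => have := hd k; push_cast; linarith
  have hcn : c n = c 0 := by simp only [hc_def]; norm_num [ZMod.natCast_self]
  have hd0 : c 1 - c 0 = 0 := by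
    have h := hsum n
    rw [hcn] at h
    have hn0 : (n:ℝ) ≠ 0 := Nat.cast_ne_zero.mpr (by omega)
    have h2 : (n:ℝ) * (c 1 - c 0) = 0 := by linarith
    exact (mul_eq_zero.mp h2).resolve_left hn0
  have hcc : ∀ i : ZMod n, x (i,0) = x (0,0) := by
    intro i
    have h := hsum i.val
    rw [hd0, mul_zero, add_zero] at h
    have hv : ((i.val : ℕ) : ZMod n) = i := ZMod.natCast_rightInverse i
    simp only [hc_def, hv] at h
    simpa using h
  funext p
  obtain ⟨i, k⟩ := p
  fin_cases k
  · show x (i,0) = (x (0,0) • kvec n) (i,0)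
    simp [kvec, hcc i]
  · show x (i,1) = (x (0,0) • kvec n) (i,1)
    rw [(hab i).1, hcc i]; simp [kvec]
  · show x (i,2) = (x (0,0) • kvec n) (i,2)
    rw [(hab i).2, hcc i]; simp [kvec]

/-- For every `n ≥ 3`, the graph `T_n` obtained from an
`n`-cycle by fusing a triangle to every vertex is a nut graph. -/
theorem triangleCycle_isNutGraph (n : ℕ) [NeZero n] (hn : 3 ≤ n) :
    IsNutGraph (triangleCycle n) := by
  have hu0 : kvec n ≠ 0 := by
    intro h
    have h0 := congrFun h (0, 0)
    simp [kvec] at h0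
  have huker : adjMat (triangleCycle n) *ᵥ kvec n = 0 := kvec_ker hn
  constructor
  · have hspan : LinearMap.ker (Matrix.mulVecLin (adjMat (triangleCycle n)))
        = Submodule.span ℝ {kvec n} := by
      apply le_antisymm
      · intro x hx
        rw [LinearMap.mem_ker, Matrix.mulVecLin_apply] at hx
        rw [ker_eq hn x hx]
        exact Submodule.smul_mem _ _ (Submodule.mem_span_singleton_self _)
      · rw [Submodule.span_le, Set.singleton_subset_iff]
        rw [SetLike.mem_coe, LinearMap.mem_ker, Matrix.mulVecLin_apply]
        exact huker
    rw [hspan]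
    exact finrank_span_singleton hu0
  · intro x hx hx0 v
    have hx' := ker_eq hn x hx
    have ht : x (0,0) ≠ 0 := by
      intro h; apply hx0; rw [hx', h, zero_smul]
    rw [hx']
    obtain ⟨i, k⟩ := v
    fin_cases k <;> simp [kvec, ht] <;> exact ht

end NutPaper
end

section
/- Let G be a connected (2t)-regular simple graph, where t ≥ 1. Let M_3(G) be the graph obtained from G by fusing a bouquet of t triangles to every vertex of G (for each vertex v of G, adding t disjoint pairs of new vertices, each pair forming a triangle with v). Then M_3(G) is a nut graph. -/
namespace NutPaper

open Matrix

variable {V : Type*}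

/-- The triangle-multiplier construction `M₃(G)`: a bouquet of `t` triangles is
fused to every vertex of `G`.  The new vertices `(v, i, 0)` and `(v, i, 1)`
form, together with `v`, the `i`-th triangle at `v`. -/
def triangleMultiplier (G : SimpleGraph V) (t : ℕ) :
    SimpleGraph (V ⊕ V × Fin t × Fin 2) :=
  SimpleGraph.fromRel (fun p q =>
    (∃ u v, p = Sum.inl u ∧ q = Sum.inl v ∧ G.Adj u v) ∨
    (∃ v i j, p = Sum.inl v ∧ q = Sum.inr (v, i, j)) ∨
    (∃ v i, p = Sum.inr (v, i, 0) ∧ q = Sum.inr (v, i, 1)))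

section NutAux

variable {V : Type*} {G : SimpleGraph V} {t : ℕ}

/-- In a connected `d`-regular graph, any `d`-eigenvector is constant. -/
lemma constant_of_eigen [Fintype V] [DecidableRel G.Adj]
    (hconn : G.Connected) {d : ℕ} (hreg : G.IsRegularOfDegree d)
    (x : V → ℝ) (hx : ∀ v, ∑ u ∈ G.neighborFinset v, x u = d * x v) :
    ∀ u w, x u = x w := by
  have : Nonempty V := hconn.nonempty
  obtain ⟨v₀, hv₀⟩ := Finite.exists_max x
  have step : ∀ a b, x a = x v₀ → G.Adj a b → x b = x v₀ := by
    intro a b ha hab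
    by_contra hb
    have hb' : x b < x v₀ := lt_of_le_of_ne (hv₀ b) hb
    have hlt : ∑ u ∈ G.neighborFinset a, x u < ∑ _u ∈ G.neighborFinset a, x v₀ :=
      Finset.sum_lt_sum (fun i _ => hv₀ i) ⟨b, by simpa using hab, hb'⟩
    rw [hx a, ha, Finset.sum_const, SimpleGraph.card_neighborFinset_eq_degree, hreg a,
      nsmul_eq_mul] at hlt
    exact lt_irrefl _ hlt
  have hall : ∀ u, x u = x v₀ := by
    suffices h : ∀ {a b : V} (_p : G.Walk a b), x a = x v₀ → x b = x v₀ by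
      intro u
      obtain ⟨p⟩ := hconn v₀ u
      exact h p rfl
    intro a b p
    induction p with
    | nil => exact id
    | cons h q ih => exact fun ha => ih (step _ _ ha h)
  intro u w
  rw [hall u, hall w]

/-- Swap the two elements of `Fin 2`. -/
def flip2 (j : Fin 2) : Fin 2 := if j = 0 then 1 else 0

lemma flip2_flip2 (j : Fin 2) : flip2 (flip2 j) = j := by revert j; decide

lemma tm_adj_inl_inl {u v : V} :
    (triangleMultiplier G t).Adj (Sum.inl u) (Sum.inl v) ↔ G.Adj u v := by
  constructor
  · rintro ⟨-, (⟨a, b, ha, hb, hab⟩ | ⟨v', i, j, hp, hq⟩ | ⟨v', i, hp, hq⟩) |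
      (⟨a, b, ha, hb, hab⟩ | ⟨v', i, j, hp, hq⟩ | ⟨v', i, hp, hq⟩)⟩ <;>
      simp_all
    exact hab.symm
  · intro h
    exact ⟨by simpa using h.ne, Or.inl (Or.inl ⟨u, v, rfl, rfl, h⟩)⟩

lemma tm_adj_inl_inr {v : V} {p : V × Fin t × Fin 2} :
    (triangleMultiplier G t).Adj (Sum.inl v) (Sum.inr p) ↔ p.1 = v := by
  constructor
  · rintro ⟨-, (⟨a, b, ha, hb, hab⟩ | ⟨v', i, j, hp, hq⟩ | ⟨v', i, hp, hq⟩) |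
      (⟨a, b, ha, hb, hab⟩ | ⟨v', i, j, hp, hq⟩ | ⟨v', i, hp, hq⟩)⟩ <;> simp_all
  · obtain ⟨w, i, j⟩ := p
    rintro rfl
    exact ⟨by simp, Or.inl (Or.inr (Or.inl ⟨_, i, j, rfl, rfl⟩))⟩

lemma tm_adj_inr_inl {v : V} {p : V × Fin t × Fin 2} :
    (triangleMultiplier G t).Adj (Sum.inr p) (Sum.inl v) ↔ v = p.1 := by
  rw [(triangleMultiplier G t).adj_comm, tm_adj_inl_inr]
  exact comm

lemma tm_adj_inr_inr {v : V} {i : Fin t} {j : Fin 2} {p : V × Fin t × Fin 2} :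
    (triangleMultiplier G t).Adj (Sum.inr (v, i, j)) (Sum.inr p) ↔ p = (v, i, flip2 j) := by
  constructor
  · rintro ⟨hne, (⟨a, b, ha, hb, hab⟩ | ⟨v', i', j', hp, hq⟩ | ⟨v', i', hp, hq⟩) |
      (⟨a, b, ha, hb, hab⟩ | ⟨v', i', j', hp, hq⟩ | ⟨v', i', hp, hq⟩)⟩
    · simp at ha
    · simp at hp
    · simp only [Sum.inr.injEq, Prod.mk.injEq] at hp hq
      obtain ⟨rfl, rfl, rfl⟩ := hp
      simpa [flip2] using hq
    · simp at hb
    · simp at hp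
    · simp only [Sum.inr.injEq, Prod.mk.injEq] at hp hq
      obtain ⟨rfl, rfl, rfl⟩ := hq
      simpa [flip2] using hp
  · rintro rfl
    fin_cases j
    · exact ⟨by simp [flip2], Or.inl (Or.inr (Or.inr ⟨v, i, by simp [flip2], by simp [flip2]⟩))⟩
    · exact ⟨by simp [flip2], Or.inr (Or.inr (Or.inr ⟨v, i, by simp [flip2], by simp [flip2]⟩))⟩

variable [Fintype V]

open scoped Classical in
lemma tm_row_inl [DecidableRel G.Adj] (x : V ⊕ V × Fin t × Fin 2 → ℝ) (v : V) :
    (adjMat (triangleMultiplier G t) *ᵥ x) (Sum.inl v)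
      = (∑ u ∈ G.neighborFinset v, x (Sum.inl u)) + ∑ p : Fin t × Fin 2, x (Sum.inr (v, p)) := by
  classical
  rw [Matrix.mulVec]
  simp only [dotProduct, adjMat, Matrix.of_apply, ite_mul, one_mul, zero_mul]
  rw [Fintype.sum_sum_type]
  congr 1
  · rw [SimpleGraph.neighborFinset_eq_filter, Finset.sum_filter]
    exact Finset.sum_congr rfl fun u _ => if_congr tm_adj_inl_inl rfl rfl
  · rw [show (∑ p : V × Fin t × Fin 2,
        if (triangleMultiplier G t).Adj (Sum.inl v) (Sum.inr p) then x (Sum.inr p) else 0)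
        = ∑ p : V × Fin t × Fin 2, if p.1 = v then x (Sum.inr p) else 0 from
      Finset.sum_congr rfl fun p _ => if_congr tm_adj_inl_inr rfl rfl]
    rw [Fintype.sum_prod_type, Finset.sum_comm]
    refine Finset.sum_congr rfl fun q _ => ?_
    rw [Finset.sum_ite_eq' Finset.univ v (fun a => x (Sum.inr (a, q)))]
    simp

open scoped Classical in
lemma tm_row_inr (x : V ⊕ V × Fin t × Fin 2 → ℝ) (v : V) (i : Fin t) (j : Fin 2) :
    (adjMat (triangleMultiplier G t) *ᵥ x) (Sum.inr (v, i, j))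
      = x (Sum.inl v) + x (Sum.inr (v, i, flip2 j)) := by
  classical
  rw [Matrix.mulVec]
  simp only [dotProduct, adjMat, Matrix.of_apply, ite_mul, one_mul, zero_mul]
  rw [Fintype.sum_sum_type]
  congr 1
  · rw [show (∑ u : V,
        if (triangleMultiplier G t).Adj (Sum.inr (v, i, j)) (Sum.inl u) then x (Sum.inl u) else 0)
        = ∑ u : V, if u = v then x (Sum.inl u) else 0 from
      Finset.sum_congr rfl fun u _ => if_congr tm_adj_inr_inl rfl rfl]
    rw [Finset.sum_ite_eq' Finset.univ v (fun a => x (Sum.inl a))]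
    simp
  · rw [show (∑ p : V × Fin t × Fin 2,
        if (triangleMultiplier G t).Adj (Sum.inr (v, i, j)) (Sum.inr p) then x (Sum.inr p) else 0)
        = ∑ p : V × Fin t × Fin 2, if p = (v, i, flip2 j) then x (Sum.inr p) else 0 from
      Finset.sum_congr rfl fun p _ => if_congr tm_adj_inr_inr rfl rfl]
    rw [Finset.sum_ite_eq' Finset.univ (v, i, flip2 j) (fun p => x (Sum.inr p))]
    simp

/-- The canonical kernel vector of `M₃(G)`. -/
def tmKer : V ⊕ V × Fin t × Fin 2 → ℝ := Sum.elim (fun _ => 1) (fun _ => -1)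

lemma tmKer_mem [DecidableRel G.Adj] (hreg : G.IsRegularOfDegree (2 * t)) :
    adjMat (triangleMultiplier G t) *ᵥ (tmKer : V ⊕ V × Fin t × Fin 2 → ℝ) = 0 := by
  funext p
  cases p with
  | inl v =>
    rw [tm_row_inl, Pi.zero_apply]
    simp only [tmKer, Sum.elim_inl, Sum.elim_inr, Finset.sum_const, smul_eq_mul, mul_one,
      SimpleGraph.card_neighborFinset_eq_degree, hreg v, Finset.card_univ, Fintype.card_prod,
      Fintype.card_fin, mul_neg, mul_one]
    push_cast
    ring
  | inr p =>
    obtain ⟨v, i, j⟩ := p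
    rw [tm_row_inr, Pi.zero_apply]
    simp [tmKer]

/-- Every kernel vector of `M₃(G)` is a multiple of the canonical one. -/
lemma tm_ker_structure [DecidableRel G.Adj]
    (hconn : G.Connected) (hreg : G.IsRegularOfDegree (2 * t))
    (x : V ⊕ V × Fin t × Fin 2 → ℝ)
    (hx : adjMat (triangleMultiplier G t) *ᵥ x = 0) (v₀ : V) :
    x = x (Sum.inl v₀) • (tmKer : V ⊕ V × Fin t × Fin 2 → ℝ) := by
  have hrow : ∀ p, (adjMat (triangleMultiplier G t) *ᵥ x) p = 0 := fun p => congrFun hx p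
  have htri : ∀ (v : V) (i : Fin t) (j : Fin 2), x (Sum.inr (v, i, j)) = -x (Sum.inl v) := by
    intro v i j
    have h1 := hrow (Sum.inr (v, i, flip2 j))
    rw [tm_row_inr, flip2_flip2] at h1
    linarith
  have heig : ∀ v, ∑ u ∈ G.neighborFinset v, x (Sum.inl u) = ((2 * t : ℕ) : ℝ) * x (Sum.inl v) := by
    intro v
    have h1 := hrow (Sum.inl v)
    rw [tm_row_inl] at h1
    have h2 : ∑ p : Fin t × Fin 2, x (Sum.inr (v, p)) = -((2 * t : ℕ) * x (Sum.inl v)) := by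
      rw [show (∑ p : Fin t × Fin 2, x (Sum.inr (v, p)))
          = ∑ _p : Fin t × Fin 2, -x (Sum.inl v) from
        Finset.sum_congr rfl fun p _ => htri v p.1 p.2]
      simp only [Finset.sum_const, Finset.card_univ, Fintype.card_prod, Fintype.card_fin,
        smul_eq_mul, mul_neg]
      push_cast
      ring
    rw [h2] at h1
    linarith
  have hconst := constant_of_eigen hconn hreg (fun v => x (Sum.inl v)) heig
  funext p
  cases p with
  | inl v =>
    simp only [Pi.smul_apply, tmKer, Sum.elim_inl, smul_eq_mul, mul_one]
    exact hconst v v₀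
  | inr p =>
    obtain ⟨v, i, j⟩ := p
    simp only [Pi.smul_apply, tmKer, Sum.elim_inr, smul_eq_mul, mul_neg, mul_one]
    rw [htri v i j, show x (Sum.inl v) = x (Sum.inl v₀) from hconst v v₀]

end NutAux

/-- If `G` is a connected `2t`-regular graph with `t ≥ 1`,
then `M₃(G)` is a nut graph. -/
theorem triangleMultiplier_isNutGraph {V : Type*} [Fintype V]
    (G : SimpleGraph V) [DecidableRel G.Adj] (t : ℕ) (ht : 1 ≤ t)
    (hconn : G.Connected) (hreg : G.IsRegularOfDegree (2 * t)) :
    IsNutGraph (triangleMultiplier G t) := by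
  classical
  have : Nonempty V := hconn.nonempty
  obtain ⟨v₀⟩ := this
  have hzne : (tmKer : V ⊕ V × Fin t × Fin 2 → ℝ) ≠ 0 := by
    intro h
    have := congrFun h (Sum.inl v₀)
    simp [tmKer] at this
  constructor
  · have hker : LinearMap.ker (Matrix.mulVecLin (adjMat (triangleMultiplier G t)))
        = Submodule.span ℝ {(tmKer : V ⊕ V × Fin t × Fin 2 → ℝ)} := by
      apply le_antisymm
      · intro x hx
        rw [LinearMap.mem_ker, Matrix.mulVecLin_apply] at hx
        rw [tm_ker_structure hconn hreg x hx v₀]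
        exact Submodule.smul_mem _ _ (Submodule.mem_span_singleton_self _)
      · rw [Submodule.span_le, Set.singleton_subset_iff]
        rw [SetLike.mem_coe, LinearMap.mem_ker, Matrix.mulVecLin_apply]
        exact tmKer_mem hreg
    rw [hker]
    exact finrank_span_singleton hzne
  · intro x hx hxne p
    have hx' := tm_ker_structure hconn hreg x hx v₀
    have hc : x (Sum.inl v₀) ≠ 0 := by
      intro hc
      apply hxne
      rw [hx', hc, zero_smul]
    rw [hx']
    cases p with
    | inl v => simpa [tmKer] using hc
    | inr p => simpa [tmKer] using hc

end NutPaper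
end

section
/- Let G be a nut graph and let x be a nonzero kernel vector of the adjacency matrix of G. If there exists a sign-reversing automorphism α of G (i.e., an automorphism with x^α = −x), then every vertex orbit of G has even size; moreover, within each vertex orbit, exactly half of the entries of x are positive and half are negative. -/
namespace NutPaper

open Matrix

variable {V : Type*}

/-- If a nut graph admits a sign-reversing automorphism (one
mapping the kernel vector `x` to `-x`), then every vertex orbit has even size,
and on each vertex orbit exactly half of the entries of `x` are positive and
half are negative. -/
theorem nut_signReversing_orbits {V : Type*} [Fintype V]
    (G : SimpleGraph V) (hG : IsNutGraph G)
    (x : V → ℝ) (hker : adjMat G *ᵥ x = 0) (hx : x ≠ 0)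
    (hrev : ∃ α : G ≃g G, ∀ v : V, x (α v) = -x v) :
    ∀ O ∈ vertexOrbits G,
      Even (Nat.card O) ∧
      Nat.card {v : V | v ∈ O ∧ 0 < x v} = Nat.card {v : V | v ∈ O ∧ x v < 0} ∧
      2 * Nat.card {v : V | v ∈ O ∧ 0 < x v} = Nat.card O := by
  obtain ⟨α, hα⟩ := hrev
  rintro O ⟨w, rfl⟩
  have hnz : ∀ v, x v ≠ 0 := hG.2 x hker hx
  have hcl : ∀ (β : G ≃g G) v, v ∈ vertexOrbit G w → β v ∈ vertexOrbit G w := by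
    rintro β v ⟨γ, rfl⟩
    exact ⟨γ.trans β, rfl⟩
  set P : Set V := {v : V | v ∈ vertexOrbit G w ∧ 0 < x v} with hP
  set N : Set V := {v : V | v ∈ vertexOrbit G w ∧ x v < 0} with hN
  have e : P ≃ N :=
    { toFun := fun p => ⟨α p.1, hcl α p.1 p.2.1, by
        have := hα p.1; rw [this]; linarith [p.2.2]⟩
      invFun := fun n => ⟨α.symm n.1, hcl α.symm n.1 n.2.1, by
        have h := hα (α.symm n.1)
        rw [α.apply_symm_apply] at h
        have := n.2.2; linarith⟩
      left_inv := fun p => Subtype.ext (α.symm_apply_apply p.1)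
      right_inv := fun n => Subtype.ext (α.apply_symm_apply n.1) }
  have hcardPN : Nat.card P = Nat.card N := Nat.card_congr e
  have hsplit : vertexOrbit G w = P ∪ N := by
    ext v
    constructor
    · intro hv
      rcases (hnz v).lt_or_gt with h | h
      · exact Or.inr ⟨hv, h⟩
      · exact Or.inl ⟨hv, h⟩
    · rintro (⟨hv, _⟩ | ⟨hv, _⟩) <;> exact hv
  have hdisj : Disjoint P N := by
    rw [Set.disjoint_left]
    rintro v ⟨_, h1⟩ ⟨_, h2⟩
    linarith
  have hcardO : Nat.card (vertexOrbit G w) = Nat.card P + Nat.card N := by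
    rw [Nat.card_coe_set_eq, Nat.card_coe_set_eq, Nat.card_coe_set_eq,
      hsplit, Set.ncard_union_eq hdisj (Set.toFinite _) (Set.toFinite _)]
  refine ⟨⟨Nat.card P, by rw [hcardO, hcardPN]⟩, hcardPN, by omega⟩

end NutPaper
end
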